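/- arXiv:2111.04809 — 5 statements merged into one kernel-verified Lean document; each statement's English description precedes it below -/
import Mathlib

section
/- Let Δ ≥ 3 and q ≥ 2 be integers, let α be a real number with 0 < α < 2π/(3Δ), and set δ_Δ = sin(α/2)·cos(αΔ/2). Fix η ∈ (0,1). Then for any real symmetric q×q matrix A satisfying |A_{i,j} − 1| < (1−η)·δ_Δ for all i, j ∈ {1,…,q}, the graph homomorphism measure μ_{G,A} satisfies strong spatial mixing on the family 𝒢_Δ of all graphs of maximum degree at most Δ with exponential rate r = 1/(1−η), i.e. there exists C > 0 such that for every G ∈ 𝒢_Δ, every vertex v, every color i ∈ [q], every Λ ⊆ V(G)∖{v} and all boundary conditions σ, τ : Λ → [q]: |Pr_μ[Ψ(v)=i | σ] − Pr_μ[Ψ(v)=i | τ]| ≤ C·(1−η)^{d_G(v,σ≠τ)}. -/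
open Finset

noncomputable section

namespace GraphHom

open scoped Classical

variable {V : Type*} {q : ℕ}

/-- The weight of an (unordered) edge `e` under the coloring `ψ` and the matrix `B`.
For a symmetric matrix `B` and `e = {u,w}` this is exactly `B (ψ u) (ψ w)`. -/
def edgeWeight {R : Type*} [Field R] (B : Matrix (Fin q) (Fin q) R) (ψ : V → Fin q)
    (e : Sym2 V) : R :=
  Sym2.lift ⟨fun u w => (B (ψ u) (ψ w) + B (ψ w) (ψ u)) / 2, fun u w => by ring⟩ e

/-- The edges of `G` as a `Finset`. -/
def edges [Fintype V] (G : SimpleGraph V) : Finset (Sym2 V) :=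
  G.edgeSet.toFinite.toFinset

/-- The graph homomorphism partition function with boundary condition `σ` on `Λ`:
`Z^σ_G(B) = ∑_{ψ : V → [q], ψ|_Λ = σ|_Λ} ∏_{uv ∈ E} B_{ψ(u),ψ(v)}`. -/
def Zcond {R : Type*} [Field R] [Fintype V] (G : SimpleGraph V)
    (B : Matrix (Fin q) (Fin q) R) (Λ : Finset V) (σ : V → Fin q) : R :=
  ∑ ψ : V → Fin q, if ∀ u ∈ Λ, ψ u = σ u then ∏ e ∈ edges G, edgeWeight B ψ e else 0

/-- The interpolation matrix `J + z(A − J)`, i.e. the matrix with entries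
`1 + z(A_{ij} − 1)`, for a real matrix `A`. -/
def intMat (A : Matrix (Fin q) (Fin q) ℝ) (z : ℂ) : Matrix (Fin q) (Fin q) ℂ :=
  fun i j => 1 + z * ((A i j : ℂ) - 1)

/-- The ratio `P^σ_{G,v,i;A}(z) = Z^{σ_{v,i}}_G(J + z(A−J)) / Z^σ_G(J + z(A−J))`. -/
def ratio [Fintype V] (G : SimpleGraph V) (A : Matrix (Fin q) (Fin q) ℝ)
    (Λ : Finset V) (σ : V → Fin q) (v : V) (i : Fin q) (z : ℂ) : ℂ :=
  Zcond G (intMat A z) (insert v Λ) (Function.update σ v i) / Zcond G (intMat A z) Λ σ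

/-- The conditional probability `Pr_μ[Ψ(v) = i ∣ σ]` in the graph homomorphism measure
`μ_{G,A}`:  `Z^{σ_{v,i}}_G(A) / Z^σ_G(A)`. -/
def condProb [Fintype V] (G : SimpleGraph V) (A : Matrix (Fin q) (Fin q) ℝ)
    (Λ : Finset V) (σ : V → Fin q) (v : V) (i : Fin q) : ℝ :=
  Zcond G A (insert v Λ) (Function.update σ v i) / Zcond G A Λ σ

/-- `G` has maximum degree at most `Δ`. -/
def MaxDegLE [Fintype V] (G : SimpleGraph V) (Δ : ℕ) : Prop :=
  ∀ v : V, (univ.filter fun u => G.Adj v u).card ≤ Δ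

end GraphHom

/-!
Put `ε = (1 - η) sin (α / 2) cos (α Δ / 2)`. Every symmetrised edge weight lies in
`[1 - ε, 1 + ε]`, and `sin t ≤ t` together with `x cos x ≤ 3 / 4` on `[0, π / 3)` gives
`(Δ + 1) ε < 1`. Changing the spin of one neighbour of `x` moves the conditional law at `x`
by at most `ε` in total variation. Pinning one more free vertex `w` and conditioning on its
spin, induction on the number of free vertices shows that the total variation distance between
the marginals at `v` under `σ` and `τ` is at most the `ε`-weighted number of walks from `v`
through free vertices to a vertex where `σ` and `τ` differ. There are at most `Δ ^ k` walks of
length `k`, and a walk reaching a disagreement has length at least `d`, which gives the bound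
`(Δ ε) ^ d / (1 - Δ ε) ≤ C (1 - η) ^ d`.
-/

namespace GraphHom

open scoped Classical

section TotalVariation

lemma div_add_le_div_add {a b a' b' : ℝ} (ha : a ≤ a') (hb : b' ≤ b) (ha0 : 0 ≤ a)
    (hb' : 0 ≤ b') (h : 0 < a + b) (h' : 0 < a' + b') : a / (a + b) ≤ a' / (a' + b') := by
  rw [div_le_div_iff₀ h h']
  nlinarith

/-- The case of two blocks, of masses `s` and `t`, in `tvDist_normalize_mul_le`. -/
lemma div_add_sub_div_add_le {ε s t a b a' b' : ℝ} (hε0 : 0 ≤ ε) (hε1 : ε < 1)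
    (hs : 0 ≤ s) (ht : 0 ≤ t) (hst : 0 < s + t)
    (ha : a ∈ Set.Icc ((1 - ε) * s) ((1 + ε) * s)) (hb : b ∈ Set.Icc ((1 - ε) * t) ((1 + ε) * t))
    (ha' : a' ∈ Set.Icc ((1 - ε) * s) ((1 + ε) * s))
    (hb' : b' ∈ Set.Icc ((1 - ε) * t) ((1 + ε) * t)) :
    a / (a + b) - a' / (a' + b') ≤ ε := by
  obtain ⟨ha₁, ha₂⟩ := ha
  obtain ⟨hb₁, hb₂⟩ := hb
  obtain ⟨ha'₁, ha'₂⟩ := ha'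
  obtain ⟨hb'₁, hb'₂⟩ := hb'
  have hd₁ : 0 < (1 + ε) * s + (1 - ε) * t := by nlinarith
  have hd₂ : 0 < (1 - ε) * s + (1 + ε) * t := by nlinarith
  have hup : a / (a + b) ≤ (1 + ε) * s / ((1 + ε) * s + (1 - ε) * t) :=
    div_add_le_div_add ha₂ hb₁ (by nlinarith) (by nlinarith) (by nlinarith) hd₁
  have hlow : (1 - ε) * s / ((1 - ε) * s + (1 + ε) * t) ≤ a' / (a' + b') :=
    div_add_le_div_add ha'₁ hb'₂ (by nlinarith) (by nlinarith) hd₂ (by nlinarith)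
  have hgap : (1 + ε) * s / ((1 + ε) * s + (1 - ε) * t)
      - (1 - ε) * s / ((1 - ε) * s + (1 + ε) * t) ≤ ε := by
    rw [div_sub_div _ _ hd₁.ne' hd₂.ne', div_le_iff₀ (mul_pos hd₁ hd₂)]
    nlinarith [mul_nonneg (mul_nonneg hε0 (show 0 ≤ 1 - ε ^ 2 by nlinarith)) (sq_nonneg (s - t))]
  linarith

lemma mul_sum_mem_Icc {ι : Type*} {ε : ℝ} {x c : ι → ℝ} (hx : ∀ i, 0 < x i)
    (hc : ∀ i, |c i - 1| ≤ ε) (T : Finset ι) :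
    ∑ i ∈ T, x i * c i ∈ Set.Icc ((1 - ε) * ∑ i ∈ T, x i) ((1 + ε) * ∑ i ∈ T, x i) := by
  rw [mul_sum, mul_sum]
  constructor <;> refine sum_le_sum fun i _ => ?_ <;>
    nlinarith [abs_le.1 (hc i), hx i]

variable {ι : Type*} [Fintype ι]

/-- The total variation distance when `p` and `p'` have the same total mass. -/
def tvDist (p p' : ι → ℝ) : ℝ := ∑ i, (p i - p' i)⁺

lemma tvDist_self (p : ι → ℝ) : tvDist p p = 0 := by
  simp [tvDist]

lemma tvDist_triangle (p p' p'' : ι → ℝ) : tvDist p p'' ≤ tvDist p p' + tvDist p' p'' := by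
  rw [tvDist, tvDist, tvDist, ← sum_add_distrib]
  gcongr with i
  exact sup_le (by linarith [le_posPart (p i - p' i), le_posPart (p' i - p'' i)])
    (add_nonneg (posPart_nonneg _) (posPart_nonneg _))

lemma dotProduct_sub_le_tvDist {g : ι → ℝ} (hg : ∀ i, g i ∈ Set.Icc 0 1) (p p' : ι → ℝ) :
    g ⬝ᵥ (p - p') ≤ tvDist p p' := by
  refine sum_le_sum fun i _ => ?_
  calc g i * (p i - p' i) ≤ g i * (p i - p' i)⁺ :=
        mul_le_mul_of_nonneg_left (le_posPart _) (hg i).1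
    _ ≤ (p i - p' i)⁺ := mul_le_of_le_one_left (posPart_nonneg _) (hg i).2

lemma exists_dotProduct_eq_tvDist (p p' : ι → ℝ) :
    ∃ g : ι → ℝ, (∀ i, g i ∈ Set.Icc 0 1) ∧ g ⬝ᵥ (p - p') = tvDist p p' := by
  refine ⟨fun i => if 0 ≤ p i - p' i then 1 else 0, fun i => by dsimp only; split_ifs <;> simp,
    sum_congr rfl fun i _ => ?_⟩
  simp only [Pi.sub_apply, posPart_eq_ite]
  split_ifs <;> simp

/-- Only the oscillation of `g` matters, because `p - p'` has total mass zero. -/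
lemma dotProduct_sub_le_mul_tvDist [Nonempty ι] {p p' g : ι → ℝ} {K : ℝ}
    (hsum : ∑ i, p i = ∑ i, p' i) (hg : ∀ i j, g i - g j ≤ K) :
    g ⬝ᵥ (p - p') ≤ K * tvDist p p' := by
  obtain ⟨j, -, hj⟩ := exists_min_image univ g univ_nonempty
  have hshift : g ⬝ᵥ (p - p') = ∑ i, (g i - g j) * (p i - p' i) := by
    have hzero : ∑ i, g j * (p i - p' i) = 0 := by
      rw [← mul_sum, sum_sub_distrib, hsum, sub_self, mul_zero]
    simp only [dotProduct, Pi.sub_apply, sub_mul, sum_sub_distrib, hzero, sub_zero]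
  rw [hshift, tvDist, mul_sum]
  refine sum_le_sum fun i _ => ?_
  have hgi : 0 ≤ g i - g j := sub_nonneg.2 (hj i (mem_univ i))
  calc (g i - g j) * (p i - p' i) ≤ (g i - g j) * (p i - p' i)⁺ :=
        mul_le_mul_of_nonneg_left (le_posPart _) hgi
    _ ≤ K * (p i - p' i)⁺ := mul_le_mul_of_nonneg_right (hg i j) (posPart_nonneg _)

lemma abs_sub_le_tvDist {p p' : ι → ℝ} (hsum : ∑ i, p i = ∑ i, p' i) (i : ι) :
    |p i - p' i| ≤ tvDist p p' := by
  have : Nonempty ι := ⟨i⟩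
  have hosc : ∀ c : ℝ, |c| ≤ 1 → ∀ j k,
      (Pi.single i c : ι → ℝ) j - (Pi.single i c : ι → ℝ) k ≤ 1 := by
    intro c hc j k
    simp only [Pi.single_apply]
    split_ifs <;> linarith [abs_le.1 hc]
  have h₁ := dotProduct_sub_le_mul_tvDist hsum (hosc 1 (by norm_num))
  have h₂ := dotProduct_sub_le_mul_tvDist hsum (hosc (-1) (by norm_num))
  rw [single_dotProduct] at h₁ h₂
  rw [abs_le]
  constructor <;> simp only [Pi.sub_apply] at h₁ h₂ <;> linarith

def normalize (x : ι → ℝ) : ι → ℝ := fun i => x i / ∑ j, x j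

lemma tvDist_normalize_mul_le [Nonempty ι] {ε : ℝ} (hε0 : 0 ≤ ε) (hε1 : ε < 1) {x c b : ι → ℝ}
    (hx : ∀ i, 0 < x i) (hc : ∀ i, |c i - 1| ≤ ε) (hb : ∀ i, |b i - 1| ≤ ε) :
    tvDist (normalize (x * c)) (normalize (x * b)) ≤ ε := by
  set S := univ.filter fun i => normalize (x * b) i ≤ normalize (x * c) i
  have hTV : tvDist (normalize (x * c)) (normalize (x * b))
      = ∑ i ∈ S, (x i * c i) / ∑ j, x j * c j - ∑ i ∈ S, (x i * b i) / ∑ j, x j * b j := by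
    rw [tvDist, ← sum_sub_distrib, sum_filter]
    refine sum_congr rfl fun i _ => ?_
    simp only [posPart_eq_ite, sub_nonneg]
    rfl
  rw [hTV, ← sum_div, ← sum_div, ← sum_add_sum_compl S (fun j => x j * c j),
    ← sum_add_sum_compl S (fun j => x j * b j)]
  exact div_add_sub_div_add_le hε0 hε1 (sum_nonneg fun i _ => (hx i).le)
    (sum_nonneg fun i _ => (hx i).le)
    (by rw [sum_add_sum_compl]; exact sum_pos (fun i _ => hx i) univ_nonempty)
    (mul_sum_mem_Icc hx hc S) (mul_sum_mem_Icc hx hc Sᶜ)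
    (mul_sum_mem_Icc hx hb S) (mul_sum_mem_Icc hx hb Sᶜ)

lemma tvDist_normalize_mul_prod_le [Nonempty ι] {α β : Type*} {ε : ℝ} (hε0 : 0 ≤ ε)
    (hε1 : ε < 1) {w : ι → β → ℝ} (hw : ∀ i b, |w i b - 1| ≤ ε) (σ τ : α → β) (N : Finset α)
    {x : ι → ℝ} (hx : ∀ i, 0 < x i) :
    tvDist (normalize (x * fun i => ∏ u ∈ N, w i (σ u)))
      (normalize (x * fun i => ∏ u ∈ N, w i (τ u))) ≤ ε * #(N.filter fun u => σ u ≠ τ u) := by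
  induction N using Finset.induction_on generalizing x with
  | empty => simp [tvDist_self]
  | insert a N ha ih =>
    have hw0 : ∀ i b, 0 < w i b := fun i b => by linarith [(abs_le.1 (hw i b)).1]
    have hsplit : ∀ ρ : α → β, (x * fun i => ∏ u ∈ insert a N, w i (ρ u))
        = (x * fun i => w i (ρ a)) * fun i => ∏ u ∈ N, w i (ρ u) := fun ρ => by
      funext i
      simp only [Pi.mul_apply, prod_insert ha, mul_assoc]
    have ih' := ih (x := x * fun i => w i (τ a)) fun i => mul_pos (hx i) (hw0 i _)
    rw [hsplit, hsplit, filter_insert]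
    by_cases hστ : σ a = τ a
    · simpa [hστ] using ih'
    · rw [if_pos hστ, card_insert_of_notMem (fun h => ha (mem_filter.1 h).1), Nat.cast_succ,
        mul_add_one, add_comm]
      set y := x * fun i => ∏ u ∈ N, w i (σ u)
      refine (tvDist_triangle _ (normalize (y * fun i => w i (τ a))) _).trans (add_le_add ?_ ?_)
      · rw [mul_right_comm x (fun i => w i (σ a))]
        exact tvDist_normalize_mul_le hε0 hε1
          (fun i => mul_pos (hx i) (prod_pos fun u _ => hw0 i _)) (hw · _) (hw · _)
      · rwa [mul_right_comm x (fun i => w i (τ a))] at ih'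

end TotalVariation

section PartitionFunction

variable {V : Type*} {q : ℕ}

def symmEntry (A : Matrix (Fin q) (Fin q) ℝ) (i j : Fin q) : ℝ := (A i j + A j i) / 2

section EdgeWeight

variable (A : Matrix (Fin q) (Fin q) ℝ)

lemma edgeWeight_mk (ψ : V → Fin q) (u w : V) :
    edgeWeight A ψ s(u, w) = symmEntry A (ψ u) (ψ w) := rfl

lemma symmEntry_pos (hA : ∀ i j, 0 < A i j) (i j : Fin q) : 0 < symmEntry A i j :=
  half_pos (add_pos (hA i j) (hA j i))

lemma pos_of_abs_sub_one_le {ε : ℝ} (hε : ε < 1) (hA : ∀ i j, |A i j - 1| ≤ ε) (i j : Fin q) :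
    0 < A i j := by
  linarith [(abs_le.1 (hA i j)).1]

lemma abs_symmEntry_sub_one_le {ε : ℝ} (hA : ∀ i j, |A i j - 1| ≤ ε) (i j : Fin q) :
    |symmEntry A i j - 1| ≤ ε := by
  have hij := abs_le.1 (hA i j)
  have hji := abs_le.1 (hA j i)
  rw [abs_le]
  unfold symmEntry
  constructor <;> linarith [hij.1, hij.2, hji.1, hji.2]

lemma edgeWeight_pos (hA : ∀ i j, 0 < A i j) (ψ : V → Fin q) (e : Sym2 V) :
    0 < edgeWeight A ψ e := by
  induction e using Sym2.ind with
  | _ u w => exact symmEntry_pos A hA _ _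

lemma edgeWeight_congr {ψ ψ' : V → Fin q} {e : Sym2 V} (h : ∀ y ∈ e, ψ y = ψ' y) :
    edgeWeight A ψ e = edgeWeight A ψ' e := by
  induction e using Sym2.ind with
  | _ u w =>
    rw [edgeWeight_mk, edgeWeight_mk, h u (Sym2.mem_mk_left u w), h w (Sym2.mem_mk_right u w)]

end EdgeWeight

variable [Fintype V] (G : SimpleGraph V) (A : Matrix (Fin q) (Fin q) ℝ)

lemma Zcond_pos (hA : ∀ i j, 0 < A i j) (Λ : Finset V) (σ : V → Fin q) : 0 < Zcond G A Λ σ := by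
  have hprod : ∀ ψ, 0 < ∏ e ∈ edges G, edgeWeight A ψ e :=
    fun ψ => prod_pos fun e _ => edgeWeight_pos A hA ψ e
  refine sum_pos' (fun ψ _ => ?_) ⟨σ, mem_univ _, by rw [if_pos fun _ _ => rfl]; exact hprod σ⟩
  split_ifs
  exacts [(hprod ψ).le, le_rfl]

lemma Zcond_eq_sum_update {Λ : Finset V} {w : V} (hw : w ∉ Λ) (σ : V → Fin q) :
    Zcond G A Λ σ = ∑ j, Zcond G A (insert w Λ) (Function.update σ w j) := by
  simp only [Zcond]
  rw [sum_comm]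
  refine sum_congr rfl fun ψ _ => ?_
  have hcond : ∀ j, (∀ u ∈ insert w Λ, ψ u = Function.update σ w j u)
      ↔ (ψ w = j ∧ ∀ u ∈ Λ, ψ u = σ u) := fun j => by
    rw [forall_mem_insert, Function.update_self]
    refine and_congr_right fun _ => forall₂_congr fun u hu => ?_
    rw [Function.update_of_ne (ne_of_mem_of_not_mem hu hw)]
  simp only [hcond, ite_and, sum_ite_eq, mem_univ, if_true]

lemma condProb_nonneg (hA : ∀ i j, 0 < A i j) (Λ : Finset V) (σ : V → Fin q) (v : V)
    (i : Fin q) : 0 ≤ condProb G A Λ σ v i :=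
  div_nonneg (Zcond_pos G A hA _ _).le (Zcond_pos G A hA _ _).le

lemma sum_condProb (hA : ∀ i j, 0 < A i j) {Λ : Finset V} {v : V} (hv : v ∉ Λ) (σ : V → Fin q) :
    ∑ j, condProb G A Λ σ v j = 1 := by
  simp only [condProb]
  rw [← sum_div, ← Zcond_eq_sum_update G A hv, div_self (Zcond_pos G A hA Λ σ).ne']

lemma condProb_eq_sum_smul (hA : ∀ i j, 0 < A i j) {Λ : Finset V} {x w : V} (hw : w ∉ Λ)
    (hxw : x ≠ w) (σ : V → Fin q) :
    condProb G A Λ σ x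
      = ∑ j, condProb G A Λ σ w j • condProb G A (insert w Λ) (Function.update σ w j) x := by
  funext i
  have hw' : w ∉ insert x Λ := by simp [hw, hxw.symm]
  simp only [Finset.sum_apply, Pi.smul_apply, smul_eq_mul, condProb]
  rw [Zcond_eq_sum_update G A hw', sum_div]
  refine sum_congr rfl fun j _ => ?_
  rw [mul_comm, div_mul_div_cancel₀ (Zcond_pos G A hA _ _).ne', insert_comm x w,
    Function.update_comm hxw]

lemma prod_edgeWeight_eq_mul (ψ : V → Fin q) (x : V) :
    ∏ e ∈ edges G, edgeWeight A ψ e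
      = (∏ u ∈ univ.filter (G.Adj x), symmEntry A (ψ x) (ψ u))
        * ∏ e ∈ (edges G).filter (x ∉ ·), edgeWeight A ψ e := by
  have himage : (edges G).filter (x ∈ ·) = (univ.filter (G.Adj x)).image (s(x, ·)) := by
    ext e
    induction e using Sym2.ind with
    | _ a b =>
      simp only [mem_filter, edges, Set.Finite.mem_toFinset, SimpleGraph.mem_edgeSet, mem_image,
        mem_univ, true_and, Sym2.mem_iff, Sym2.eq_iff]
      constructor
      · rintro ⟨hab, rfl | rfl⟩
        exacts [⟨b, hab, Or.inl ⟨rfl, rfl⟩⟩, ⟨a, hab.symm, Or.inr ⟨rfl, rfl⟩⟩]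
      · rintro ⟨u, hxu, ⟨rfl, rfl⟩ | ⟨rfl, rfl⟩⟩
        exacts [⟨hxu, Or.inl rfl⟩, ⟨hxu.symm, Or.inr rfl⟩]
  rw [← prod_filter_mul_prod_filter_not (edges G) (x ∈ ·), himage,
    prod_image fun u _ v _ h => Sym2.congr_right.1 h]
  rfl

lemma Zcond_of_forall_mem {Λ : Finset V} (hΛ : ∀ y, y ∈ Λ) (σ : V → Fin q) :
    Zcond G A Λ σ = ∏ e ∈ edges G, edgeWeight A σ e := by
  rw [Zcond, sum_eq_single σ (fun ψ _ hψ => if_neg fun h => hψ (funext fun y => h y (hΛ y)))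
    (fun h => absurd (mem_univ σ) h), if_pos fun _ _ => rfl]

lemma condProb_of_forall_mem (hA : ∀ i j, 0 < A i j) {Λ : Finset V} {x : V} (hx : x ∉ Λ)
    (hΛ : ∀ y, y ≠ x → y ∈ Λ) (σ : V → Fin q) :
    condProb G A Λ σ x = normalize fun j => ∏ u ∈ univ.filter (G.Adj x), symmEntry A j (σ u) := by
  set R := ∏ e ∈ (edges G).filter (x ∉ ·), edgeWeight A σ e
  have hR : 0 < R := prod_pos fun e _ => edgeWeight_pos A hA σ e
  have hnum : ∀ j, Zcond G A (insert x Λ) (Function.update σ x j)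
      = (∏ u ∈ univ.filter (G.Adj x), symmEntry A j (σ u)) * R := fun j => by
    rw [Zcond_of_forall_mem G A (fun y => mem_insert.2 ((eq_or_ne y x).imp id (hΛ y))),
      prod_edgeWeight_eq_mul G A _ x, Function.update_self]
    congr 1
    · refine prod_congr rfl fun u hu => ?_
      rw [Function.update_of_ne (mem_filter.1 hu).2.ne']
    · refine prod_congr rfl fun e he => edgeWeight_congr A fun y hy => ?_
      exact Function.update_of_ne (fun (h : y = x) => (mem_filter.1 he).2 (h ▸ hy)) _ _
  funext j
  rw [condProb, Zcond_eq_sum_update G A hx, hnum, sum_congr rfl fun k _ => hnum k, ← sum_mul,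
    mul_div_mul_right _ _ hR.ne']
  rfl

end PartitionFunction

section Influence

variable {V : Type*}

/-- `walkWeight ε G U D k x` is `ε ^ (k + 1)` times the number of walks `x, x₁, …, x_k, u` in `G`
with `x₁, …, x_k ∈ U` and `u ∈ D`. -/
def walkWeight (ε : ℝ) (G : SimpleGraph V) (U D : Finset V) : ℕ → V → ℝ
  | 0, x => ε * #(D.filter (G.Adj x))
  | k + 1, x => ε * ∑ y ∈ U.filter (G.Adj x), walkWeight ε G U D k y

def influence (ε : ℝ) (G : SimpleGraph V) (U D : Finset V) (x : V) : ℝ :=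
  ∑' k, walkWeight ε G U D k x

variable (G : SimpleGraph V) {Δ : ℕ} {ε : ℝ}

lemma walkWeight_nonneg (hε : 0 ≤ ε) (U D : Finset V) (k : ℕ) (x : V) :
    0 ≤ walkWeight ε G U D k x := by
  induction k generalizing x with
  | zero => exact mul_nonneg hε (Nat.cast_nonneg _)
  | succ k ih => exact mul_nonneg hε (sum_nonneg fun y _ => ih y)

lemma walkWeight_mono (hε : 0 ≤ ε) (U : Finset V) {D D' : Finset V} (hD : D ⊆ D') (k : ℕ)
    (x : V) : walkWeight ε G U D k x ≤ walkWeight ε G U D' k x := by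
  induction k generalizing x with
  | zero =>
    exact mul_le_mul_of_nonneg_left (by exact_mod_cast card_le_card (filter_subset_filter _ hD)) hε
  | succ k ih => exact mul_le_mul_of_nonneg_left (sum_le_sum fun y _ => ih y) hε

lemma walkWeight_eq_zero {U D : Finset V} {k : ℕ} {x : V}
    (hfar : ∀ u ∈ D, ((k + 1 : ℕ) : ℕ∞) < G.edist x u) : walkWeight ε G U D k x = 0 := by
  induction k generalizing x with
  | zero =>
    have hD : D.filter (G.Adj x) = ∅ := filter_eq_empty_iff.2 fun u hu hxu =>
      absurd (hfar u hu) (by rw [SimpleGraph.edist_eq_one_iff_adj.2 hxu]; simp)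
    rw [walkWeight, hD, card_empty, Nat.cast_zero, mul_zero]
  | succ k ih =>
    refine (mul_eq_zero_of_right _ (sum_eq_zero fun y hy => ih fun u hu => ?_))
    refine lt_of_not_ge fun hle => (hfar u hu).not_ge ?_
    calc G.edist x u ≤ G.edist x y + G.edist y u := SimpleGraph.edist_triangle
      _ ≤ 1 + ((k + 1 : ℕ) : ℕ∞) :=
          add_le_add (SimpleGraph.edist_eq_one_iff_adj.2 (mem_filter.1 hy).2).le hle
      _ = ((k + 1 + 1 : ℕ) : ℕ∞) := by push_cast; ring

lemma influence_nonneg (hε : 0 ≤ ε) (U D : Finset V) (x : V) : 0 ≤ influence ε G U D x :=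
  tsum_nonneg fun k => walkWeight_nonneg G hε U D k x

variable [Fintype V]

lemma card_filter_adj_le (hdeg : MaxDegLE G Δ) (S : Finset V) (x : V) :
    #(S.filter (G.Adj x)) ≤ Δ :=
  (card_le_card (filter_subset_filter _ (subset_univ S))).trans (hdeg x)

lemma walkWeight_le (hε : 0 ≤ ε) (hdeg : MaxDegLE G Δ) {U D : Finset V} {c : ℕ}
    (hD : ∀ x, #(D.filter (G.Adj x)) ≤ c) (k : ℕ) (x : V) :
    walkWeight ε G U D k x ≤ c * ε * (Δ * ε) ^ k := by
  induction k generalizing x with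
  | zero =>
    rw [walkWeight, pow_zero, mul_one, mul_comm]
    gcongr
    exact_mod_cast hD x
  | succ k ih =>
    have hsum : ∑ y ∈ U.filter (G.Adj x), walkWeight ε G U D k y
        ≤ #(U.filter (G.Adj x)) * (c * ε * (Δ * ε) ^ k) := by
      simpa using sum_le_card_nsmul _ _ _ fun y _ => ih y
    calc walkWeight ε G U D (k + 1) x
        ≤ ε * (#(U.filter (G.Adj x)) * (c * ε * (Δ * ε) ^ k)) :=
          mul_le_mul_of_nonneg_left hsum hε
      _ ≤ ε * (Δ * (c * ε * (Δ * ε) ^ k)) := by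
          gcongr
          exact_mod_cast card_filter_adj_le G hdeg U x
      _ = c * ε * (Δ * ε) ^ (k + 1) := by ring

lemma summable_walkWeight (hε : 0 ≤ ε) (hΔε : Δ * ε < 1) (hdeg : MaxDegLE G Δ) (U D : Finset V)
    (x : V) : Summable fun k => walkWeight ε G U D k x :=
  Summable.of_nonneg_of_le (fun k => walkWeight_nonneg G hε U D k x)
    (walkWeight_le G hε hdeg (fun x => card_filter_adj_le G hdeg D x) · x)
    ((summable_geometric_of_lt_one (by positivity) hΔε).mul_left _)

lemma influence_mono (hε : 0 ≤ ε) (hΔε : Δ * ε < 1) (hdeg : MaxDegLE G Δ) (U : Finset V)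
    {D D' : Finset V} (hD : D ⊆ D') (x : V) : influence ε G U D x ≤ influence ε G U D' x :=
  (summable_walkWeight G hε hΔε hdeg U D x).tsum_le_tsum (walkWeight_mono G hε U hD · x)
    (summable_walkWeight G hε hΔε hdeg U D' x)

lemma walkWeight_zero_le_influence (hε : 0 ≤ ε) (hΔε : Δ * ε < 1) (hdeg : MaxDegLE G Δ)
    (U D : Finset V) (x : V) : walkWeight ε G U D 0 x ≤ influence ε G U D x :=
  (summable_walkWeight G hε hΔε hdeg U D x).le_tsum 0 fun k _ => walkWeight_nonneg G hε U D k x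

lemma influence_le (hε : 0 ≤ ε) (hΔε : Δ * ε < 1) (hdeg : MaxDegLE G Δ) {U D : Finset V} {c : ℕ}
    (hD : ∀ x, #(D.filter (G.Adj x)) ≤ c) (x : V) :
    influence ε G U D x ≤ c * ε / (1 - Δ * ε) := by
  have hgeom := summable_geometric_of_lt_one (by positivity) hΔε
  rw [div_eq_mul_inv, ← tsum_geometric_of_lt_one (by positivity) hΔε, ← tsum_mul_left]
  exact (summable_walkWeight G hε hΔε hdeg U D x).tsum_le_tsum (walkWeight_le G hε hdeg hD · x)
    (hgeom.mul_left _)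

lemma influence_singleton_lt_one (hε : 0 ≤ ε) (hε1 : (Δ + 1) * ε < 1) (hdeg : MaxDegLE G Δ)
    (U : Finset V) (w x : V) : influence ε G U {w} x < 1 := by
  have hΔε : Δ * ε < 1 := by nlinarith
  refine (influence_le G hε hΔε hdeg (c := 1)
    (fun z => (card_filter_le _ _).trans (card_singleton w).le) x).trans_lt ?_
  rw [div_lt_one (by linarith), Nat.cast_one, one_mul]
  linarith

lemma influence_le_pow (hε : 0 ≤ ε) (hΔε : Δ * ε < 1) (hdeg : MaxDegLE G Δ) (U D : Finset V)
    {v : V} {d : ℕ} (hfar : ∀ u ∈ D, (d : ℕ∞) ≤ G.edist v u) :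
    influence ε G U D v ≤ (Δ * ε) ^ d / (1 - Δ * ε) := by
  have hγ : 0 ≤ (Δ : ℝ) * ε := by positivity
  have hsum := summable_walkWeight G hε hΔε hdeg U D v
  have hgeom := summable_geometric_of_lt_one hγ hΔε
  have hshort : ∀ k ∈ range (d - 1), walkWeight ε G U D k v = 0 := fun k hk =>
    walkWeight_eq_zero G fun u hu =>
      lt_of_lt_of_le (by have := mem_range.1 hk; exact_mod_cast (by omega : k + 1 < d)) (hfar u hu)
  rw [influence, ← hsum.sum_add_tsum_nat_add (d - 1), sum_eq_zero hshort, zero_add, div_eq_mul_inv,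
    ← tsum_geometric_of_lt_one hγ hΔε, ← tsum_mul_left]
  refine ((summable_nat_add_iff (d - 1)).2 hsum).tsum_le_tsum (fun k => ?_) (hgeom.mul_left _)
  calc walkWeight ε G U D (k + (d - 1)) v ≤ Δ * ε * (Δ * ε) ^ (k + (d - 1)) :=
        walkWeight_le G hε hdeg (fun x => card_filter_adj_le G hdeg D x) _ v
    _ = (Δ * ε) ^ (k + (d - 1) + 1) := by ring
    _ ≤ (Δ * ε) ^ (d + k) := pow_le_pow_of_le_one hγ hΔε.le (by omega)
    _ = (Δ * ε) ^ d * (Δ * ε) ^ k := pow_add _ _ _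

lemma influence_eq (hε : 0 ≤ ε) (hΔε : Δ * ε < 1) (hdeg : MaxDegLE G Δ) (U D : Finset V) (x : V) :
    influence ε G U D x
      = ε * #(D.filter (G.Adj x)) + ε * ∑ y ∈ U.filter (G.Adj x), influence ε G U D y := by
  rw [influence, (summable_walkWeight G hε hΔε hdeg U D x).tsum_eq_zero_add]
  simp only [walkWeight]
  rw [tsum_mul_left, Summable.tsum_finsetSum fun y _ => summable_walkWeight G hε hΔε hdeg U D y]
  rfl

lemma eq_zero_of_eq_mul_sum_adj (hε : 0 ≤ ε) (hΔε : Δ * ε < 1) (hdeg : MaxDegLE G Δ)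
    {S : Finset V} {g : V → ℝ} (hg : ∀ x, g x = ε * ∑ y ∈ S.filter (G.Adj x), g y) (x : V) :
    g x = 0 := by
  have : Nonempty V := ⟨x⟩
  obtain ⟨m, hm⟩ := Finite.exists_max fun y => |g y|
  have hsum : |∑ y ∈ S.filter (G.Adj m), g y| ≤ #(S.filter (G.Adj m)) * |g m| :=
    (abs_sum_le_sum_abs _ _).trans (by simpa using sum_le_card_nsmul _ _ _ fun y _ => hm y)
  have hbound : |g m| ≤ Δ * ε * |g m| :=
    calc |g m| = ε * |∑ y ∈ S.filter (G.Adj m), g y| := by rw [hg m, abs_mul, abs_of_nonneg hε]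
      _ ≤ ε * (Δ * |g m|) := by
          gcongr
          refine hsum.trans (mul_le_mul_of_nonneg_right ?_ (abs_nonneg _))
          exact_mod_cast card_filter_adj_le G hdeg S m
      _ = Δ * ε * |g m| := by ring
  have hm0 : |g m| ≤ 0 := by nlinarith [abs_nonneg (g m)]
  exact abs_nonpos_iff.1 ((hm x).trans hm0)

/-- Eliminating `w` from `U`: a walk either avoids `w` or splits at its first visit to `w`. -/
lemma influence_erase (hε : 0 ≤ ε) (hΔε : Δ * ε < 1) (hdeg : MaxDegLE G Δ) {U : Finset V}
    (D : Finset V) {w : V} (hw : w ∈ U) (x : V) :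
    influence ε G U D x = influence ε G (U.erase w) {w} x * influence ε G U D w
      + influence ε G (U.erase w) D x := by
  have hsplit : ∀ (y : V) (f : V → ℝ), ∑ z ∈ U.filter (G.Adj y), f z
      = (if G.Adj y w then f w else 0) + ∑ z ∈ (U.erase w).filter (G.Adj y), f z := by
    intro y f
    rw [sum_filter, sum_filter]
    exact (add_sum_erase _ _ hw).symm
  have hcard : ∀ y, (#(({w} : Finset V).filter (G.Adj y)) : ℝ) = if G.Adj y w then 1 else 0 := by
    intro y
    rw [filter_singleton]
    split_ifs <;> simp
  refine sub_eq_zero.1 (eq_zero_of_eq_mul_sum_adj G hε hΔε hdeg (S := U.erase w)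
    (g := fun y => influence ε G U D y
      - (influence ε G (U.erase w) {w} y * influence ε G U D w + influence ε G (U.erase w) D y))
    (fun y => ?_) x)
  rw [influence_eq G hε hΔε hdeg U D y, influence_eq G hε hΔε hdeg (U.erase w) {w} y,
    influence_eq G hε hΔε hdeg (U.erase w) D y, hsplit, hcard]
  simp only [sum_sub_distrib, sum_add_distrib, ← sum_mul]
  split_ifs <;> ring

end Influence

section Mixing

lemma nonpos_of_forall_pos_exists_gt {α : Type*} {s : Finset α} {f : α → ℝ}
    (h : ∀ x ∈ s, 0 < f x → ∃ y ∈ s, f x < f y) : ∀ x ∈ s, f x ≤ 0 := by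
  intro x hx
  obtain ⟨m, hm, hmax⟩ := exists_max_image s f ⟨x, hx⟩
  refine (hmax x hx).trans (not_lt.1 fun hpos => ?_)
  obtain ⟨y, hy, hlt⟩ := h m hm hpos
  exact (hmax y hy).not_gt hlt

variable {V β : Type*} [DecidableEq β]

def disagree (Λ : Finset V) (σ τ : V → β) : Finset V := Λ.filter fun u => σ u ≠ τ u

lemma disagree_update_subset_singleton (Λ : Finset V) (w : V) (σ : V → β) (j k : β) :
    disagree (insert w Λ) (Function.update σ w j) (Function.update σ w k) ⊆ {w} := by
  intro u hu
  by_contra huw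
  rw [mem_singleton] at huw
  exact (mem_filter.1 hu).2 (by rw [Function.update_of_ne huw, Function.update_of_ne huw])

lemma disagree_update_subset (Λ : Finset V) (w : V) (σ τ : V → β) (j : β) :
    disagree (insert w Λ) (Function.update σ w j) (Function.update τ w j) ⊆ disagree Λ σ τ := by
  intro u hu
  obtain ⟨huΛ, hστ⟩ := mem_filter.1 hu
  rcases eq_or_ne u w with rfl | huw
  · simp at hστ
  · rw [Function.update_of_ne huw, Function.update_of_ne huw] at hστ
    exact mem_filter.2 ⟨(mem_insert.1 huΛ).resolve_left huw, hστ⟩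

variable [Fintype V] {q : ℕ} (G : SimpleGraph V) (A : Matrix (Fin q) (Fin q) ℝ)

/-- Conditioning on the spin at `w` writes the law at `x` as a mixture of the laws with `w`
pinned: the mixing weights contribute the first term, the pinned laws the second. -/
lemma tvDist_condProb_le_of_pin (hA : ∀ i j, 0 < A i j) {Λ : Finset V} {x w : V} (hw : w ∉ Λ)
    (hxw : x ≠ w) (σ τ : V → Fin q) {a b : ℝ}
    (hσ : ∀ j k, tvDist (condProb G A (insert w Λ) (Function.update σ w j) x)
      (condProb G A (insert w Λ) (Function.update σ w k) x) ≤ a)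
    (hστ : ∀ j, tvDist (condProb G A (insert w Λ) (Function.update σ w j) x)
      (condProb G A (insert w Λ) (Function.update τ w j) x) ≤ b) :
    tvDist (condProb G A Λ σ x) (condProb G A Λ τ x)
      ≤ a * tvDist (condProb G A Λ σ w) (condProb G A Λ τ w) + b := by
  have : Nonempty (Fin q) := ⟨σ x⟩
  obtain ⟨g, hg, hgTV⟩ := exists_dotProduct_eq_tvDist (condProb G A Λ σ x) (condProb G A Λ τ x)
  set Q : (V → Fin q) → Fin q → Fin q → ℝ :=
    fun ρ j => condProb G A (insert w Λ) (Function.update ρ w j) x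
  have htower : ∀ ρ, g ⬝ᵥ condProb G A Λ ρ x = ∑ j, condProb G A Λ ρ w j * (g ⬝ᵥ Q ρ j) :=
    fun ρ => by
      rw [condProb_eq_sum_smul G A hA hw hxw ρ, dotProduct_sum]
      simp only [dotProduct_smul, smul_eq_mul, Q]
  have hosc : ∀ j k, g ⬝ᵥ Q σ j - g ⬝ᵥ Q σ k ≤ a := fun j k => by
    rw [← dotProduct_sub]
    exact (dotProduct_sub_le_tvDist hg _ _).trans (hσ j k)
  have hpin : ∀ j, condProb G A Λ τ w j * (g ⬝ᵥ Q σ j - g ⬝ᵥ Q τ j)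
      ≤ condProb G A Λ τ w j * b := fun j => by
    rw [← dotProduct_sub]
    exact mul_le_mul_of_nonneg_left ((dotProduct_sub_le_tvDist hg _ _).trans (hστ j))
      (condProb_nonneg G A hA _ _ _ _)
  rw [← hgTV]
  calc g ⬝ᵥ (condProb G A Λ σ x - condProb G A Λ τ x)
      = ∑ j, (condProb G A Λ σ w j * (g ⬝ᵥ Q σ j) - condProb G A Λ τ w j * (g ⬝ᵥ Q τ j)) := by
        rw [dotProduct_sub, htower, htower, sum_sub_distrib]
    _ = (fun j => g ⬝ᵥ Q σ j) ⬝ᵥ (condProb G A Λ σ w - condProb G A Λ τ w)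
        + ∑ j, condProb G A Λ τ w j * (g ⬝ᵥ Q σ j - g ⬝ᵥ Q τ j) := by
        rw [dotProduct, ← sum_add_distrib]
        exact sum_congr rfl fun j _ => by simp only [Pi.sub_apply]; ring
    _ ≤ a * tvDist (condProb G A Λ σ w) (condProb G A Λ τ w) + ∑ j, condProb G A Λ τ w j * b :=
        add_le_add (dotProduct_sub_le_mul_tvDist
          ((sum_condProb G A hA hw σ).trans (sum_condProb G A hA hw τ).symm) hosc)
          (sum_le_sum fun j _ => hpin j)
    _ = a * tvDist (condProb G A Λ σ w) (condProb G A Λ τ w) + b := by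
        rw [← sum_mul, sum_condProb G A hA hw τ, one_mul]

variable {Δ : ℕ} {ε : ℝ}

lemma tvDist_condProb_le_of_forall_mem (hε0 : 0 ≤ ε) (hε1 : ε < 1)
    (hA : ∀ i j, |A i j - 1| ≤ ε) {Λ : Finset V} {x : V} (hx : x ∉ Λ)
    (hΛ : ∀ y, y ≠ x → y ∈ Λ) (σ τ : V → Fin q) :
    tvDist (condProb G A Λ σ x) (condProb G A Λ τ x)
      ≤ ε * #((disagree Λ σ τ).filter (G.Adj x)) := by
  have : Nonempty (Fin q) := ⟨σ x⟩
  have hpos := pos_of_abs_sub_one_le A hε1 hA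
  have h := tvDist_normalize_mul_prod_le hε0 hε1 (abs_symmEntry_sub_one_le A hA) σ τ
    (univ.filter (G.Adj x)) (x := 1) fun _ => one_pos
  rw [one_mul, one_mul] at h
  rw [condProb_of_forall_mem G A hpos hx hΛ, condProb_of_forall_mem G A hpos hx hΛ]
  refine h.trans (mul_le_mul_of_nonneg_left (Nat.cast_le.2 (card_le_card fun u hu => ?_)) hε0)
  simp only [disagree, mem_filter, mem_univ, true_and] at hu ⊢
  exact ⟨⟨hΛ u hu.1.ne', hu.2⟩, hu.1⟩

lemma sub_influence_le_mul_sub (hε0 : 0 ≤ ε) (hΔε : Δ * ε < 1) (hdeg : MaxDegLE G Δ)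
    (hA : ∀ i j, 0 < A i j) {U : Finset V} {y w : V} (hw : w ∈ U) (hwy : w ≠ y)
    (σ τ : V → Fin q)
    (ih : ∀ σ' τ' : V → Fin q,
      tvDist (condProb G A (insert w Uᶜ) σ' y) (condProb G A (insert w Uᶜ) τ' y)
        ≤ influence ε G (U.erase w) (disagree (insert w Uᶜ) σ' τ') y) :
    tvDist (condProb G A Uᶜ σ y) (condProb G A Uᶜ τ y) - influence ε G U (disagree Uᶜ σ τ) y
      ≤ influence ε G (U.erase w) {w} y * (tvDist (condProb G A Uᶜ σ w) (condProb G A Uᶜ τ w)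
        - influence ε G U (disagree Uᶜ σ τ) w) := by
  have hpin := tvDist_condProb_le_of_pin G A hA (notMem_compl.2 hw) hwy.symm σ τ
    (fun j k => (ih _ _).trans
      (influence_mono G hε0 hΔε hdeg _ (disagree_update_subset_singleton _ _ _ _ _) y))
    (fun j => (ih _ _).trans (influence_mono G hε0 hΔε hdeg _ (disagree_update_subset _ _ _ _ _) y))
  rw [influence_erase G hε0 hΔε hdeg (disagree Uᶜ σ τ) hw y, mul_sub]
  linarith

theorem tvDist_condProb_le_influence (hε0 : 0 ≤ ε) (hε1 : (Δ + 1) * ε < 1)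
    (hdeg : MaxDegLE G Δ) (hA : ∀ i j, |A i j - 1| ≤ ε) (U : Finset V) (σ τ : V → Fin q)
    {x : V} (hx : x ∈ U) :
    tvDist (condProb G A Uᶜ σ x) (condProb G A Uᶜ τ x) ≤ influence ε G U (disagree Uᶜ σ τ) x := by
  have hΔε : Δ * ε < 1 := by nlinarith
  have hε1' : ε < 1 := by nlinarith
  induction U using Finset.strongInduction generalizing σ τ x with
  | H U ih =>
  by_cases hU : ∃ w ∈ U, w ≠ x
  · -- For free `y ≠ w`, the excess of `tvDist` over `influence` at `y` is at most a factor
    -- `< 1` times the excess at `w`, so the excess has no positive maximum on `U`.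
    have hf := nonpos_of_forall_pos_exists_gt (s := U) (f := fun y =>
        tvDist (condProb G A Uᶜ σ y) (condProb G A Uᶜ τ y) - influence ε G U (disagree Uᶜ σ τ) y)
      fun y hy hfy => by
        obtain ⟨w, hw, hwy⟩ : ∃ w ∈ U, w ≠ y := by
          by_cases hxy : x = y
          · exact hxy ▸ hU
          · exact ⟨x, hx, hxy⟩
        have hstep := sub_influence_le_mul_sub G A hε0 hΔε hdeg (pos_of_abs_sub_one_le A hε1' hA)
          hw hwy σ τ fun σ' τ' => by
            simpa only [compl_erase] using
              ih (U.erase w) (erase_ssubset hw) σ' τ' (mem_erase.2 ⟨hwy.symm, hy⟩)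
        have ha0 := influence_nonneg G hε0 (U.erase w) {w} y
        have ha1 := influence_singleton_lt_one G hε0 hε1 hdeg (U.erase w) w y
        exact ⟨w, hw, by nlinarith⟩
    linarith [hf x hx]
  · have hΛ : ∀ y, y ≠ x → y ∈ Uᶜ := fun y hy =>
      mem_compl.2 fun h => hU ⟨y, h, hy⟩
    exact (tvDist_condProb_le_of_forall_mem G A hε0 hε1' hA (notMem_compl.2 hx) hΛ σ τ).trans
      (walkWeight_zero_le_influence G hε0 hΔε hdeg U _ x)

theorem abs_condProb_sub_le (hε0 : 0 ≤ ε) (hε1 : (Δ + 1) * ε < 1) (hdeg : MaxDegLE G Δ)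
    (hA : ∀ i j, |A i j - 1| ≤ ε) {Λ : Finset V} {v : V} (hv : v ∉ Λ) (σ τ : V → Fin q)
    (i : Fin q) {d : ℕ} (hd : ∀ u ∈ Λ, σ u ≠ τ u → (d : ℕ∞) ≤ G.edist v u) :
    |condProb G A Λ σ v i - condProb G A Λ τ v i| ≤ (Δ * ε) ^ d / (1 - Δ * ε) := by
  have hpos := pos_of_abs_sub_one_le A (by nlinarith) hA
  calc |condProb G A Λ σ v i - condProb G A Λ τ v i|
      ≤ tvDist (condProb G A Λ σ v) (condProb G A Λ τ v) :=
        abs_sub_le_tvDist ((sum_condProb G A hpos hv σ).trans (sum_condProb G A hpos hv τ).symm) i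
    _ ≤ influence ε G Λᶜ (disagree Λ σ τ) v := by
        simpa only [compl_compl] using
          tvDist_condProb_le_influence G A hε0 hε1 hdeg hA Λᶜ σ τ (mem_compl.2 hv)
    _ ≤ (Δ * ε) ^ d / (1 - Δ * ε) :=
        influence_le_pow G hε0 (by nlinarith) hdeg _ _ fun u hu => hd u (mem_filter.1 hu).1
          (mem_filter.1 hu).2

end Mixing

section Trigonometry

open Real

variable {Δ : ℕ} {α : ℝ}

lemma mul_div_two_lt_pi_div_three (hΔ : 0 < Δ) (hα : α < 2 * π / (3 * Δ)) :
    α * Δ / 2 < π / 3 := by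
  have hΔ' : (0 : ℝ) < 3 * Δ := by positivity
  rw [lt_div_iff₀ hΔ'] at hα
  linarith

lemma sin_mul_cos_pos (hΔ : 0 < Δ) (hα0 : 0 < α) (hα : α < 2 * π / (3 * Δ)) :
    0 < sin (α / 2) * cos (α * Δ / 2) := by
  have hx := mul_div_two_lt_pi_div_three hΔ hα
  have hΔ1 : (1 : ℝ) ≤ Δ := by exact_mod_cast hΔ
  refine mul_pos (sin_pos_of_pos_of_lt_pi (by positivity) (by nlinarith [pi_pos]))
    (cos_pos_of_mem_Ioo ⟨by nlinarith [pi_pos], by linarith [pi_pos]⟩)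

lemma mul_cos_le_three_quarters {x : ℝ} (hx0 : 0 ≤ x) (hx : x < π / 3) : x * cos x ≤ 3 / 4 := by
  have hπ := pi_lt_d2
  have hs : 0 < √(x ^ 2 + 1) := sqrt_pos.2 (by positivity)
  have hsq : √(x ^ 2 + 1) ^ 2 = x ^ 2 + 1 := sq_sqrt (by positivity)
  calc x * cos x ≤ x * (1 / √(x ^ 2 + 1)) :=
        mul_le_mul_of_nonneg_left (cos_le_one_div_sqrt_sq_add_one (by linarith) (by linarith)) hx0
    _ ≤ 3 / 4 := by
        rw [mul_one_div, div_le_iff₀ hs]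
        nlinarith

lemma succ_mul_sin_mul_cos_le_one (hΔ : 3 ≤ Δ) (hα0 : 0 < α) (hα : α < 2 * π / (3 * Δ)) :
    (Δ + 1) * (sin (α / 2) * cos (α * Δ / 2)) ≤ 1 := by
  have hΔ3 : (3 : ℝ) ≤ Δ := by exact_mod_cast hΔ
  have hx := mul_div_two_lt_pi_div_three (by omega) hα
  have hcos : 0 ≤ cos (α * Δ / 2) :=
    cos_nonneg_of_mem_Icc ⟨by nlinarith [pi_pos], by linarith [pi_pos]⟩
  have hsin : (Δ + 1) * sin (α / 2) ≤ 4 / 3 * (α * Δ / 2) :=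
    calc (Δ + 1) * sin (α / 2) ≤ (Δ + 1) * (α / 2) :=
          mul_le_mul_of_nonneg_left (sin_le (by positivity)) (by positivity)
      _ ≤ 4 / 3 * (α * Δ / 2) := by nlinarith
  calc (Δ + 1) * (sin (α / 2) * cos (α * Δ / 2))
      = (Δ + 1) * sin (α / 2) * cos (α * Δ / 2) := by ring
    _ ≤ 4 / 3 * ((α * Δ / 2) * cos (α * Δ / 2)) := by
        rw [← mul_assoc]
        exact mul_le_mul_of_nonneg_right hsin hcos
    _ ≤ 1 := by linarith [mul_cos_le_three_quarters (by positivity) hx]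

end Trigonometry

theorem SSM_graph_homomorphisms_general
    (Δ q : ℕ) (hΔ : 3 ≤ Δ)
    (α : ℝ) (hα0 : 0 < α) (hα1 : α < 2 * Real.pi / (3 * Δ))
    (η : ℝ) (hη : η ∈ Set.Ioo (0 : ℝ) 1)
    (A : Matrix (Fin q) (Fin q) ℝ)
    (hA : ∀ i j, |A i j - 1| < (1 - η) * (Real.sin (α / 2) * Real.cos (α * Δ / 2))) :
    ∃ C > 0, ∀ (V : Type) (_ : Fintype V) (G : SimpleGraph V), MaxDegLE G Δ →
      ∀ (v : V) (i : Fin q) (Λ : Finset V), v ∉ Λ → ∀ σ τ : V → Fin q,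
        ∀ d : ℕ, (∀ u ∈ Λ, σ u ≠ τ u → (d : ℕ∞) ≤ G.edist v u) →
          |condProb G A Λ σ v i - condProb G A Λ τ v i| ≤ C * (1 - η) ^ d := by
  obtain ⟨hη0, hη1⟩ := hη
  have hδ0 := sin_mul_cos_pos (by omega) hα0 hα1
  have hδ1 := succ_mul_sin_mul_cos_le_one hΔ hα0 hα1
  set ε := (1 - η) * (Real.sin (α / 2) * Real.cos (α * Δ / 2))
  have hε0 : 0 ≤ ε := mul_nonneg (by linarith) hδ0.le
  have hε1 : (Δ + 1) * ε < 1 := by nlinarith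
  have hγ : Δ * ε ≤ 1 - η := by nlinarith
  refine ⟨(1 - Δ * ε)⁻¹, inv_pos.2 (by linarith), fun V _ G hdeg v i Λ hv σ τ d hd => ?_⟩
  rw [← div_eq_inv_mul]
  refine (abs_condProb_sub_le G A hε0 hε1 hdeg (fun i j => (hA i j).le) hv σ τ i hd).trans ?_
  gcongr
  linarith

/-- Let `Δ ≥ 3`, `q ≥ 2`, `0 < α < 2π/(3Δ)` and
`δ_Δ = sin(α/2)·cos(αΔ/2)`.  Fix `η ∈ (0,1)`.  Then for any real symmetric `q × q`
matrix `A` with `|A_{ij} − 1| < (1−η)δ_Δ` for all `i, j`, the graph homomorphism measure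
`μ_{G,A}` satisfies strong spatial mixing on the family of all graphs of maximum degree
at most `Δ` with exponential rate `1/(1−η)`:  there is `C > 0` such that for all such
`G`, all `v`, `i`, `Λ ⊆ V ∖ {v}` and boundary conditions `σ, τ` on `Λ`,
`|Pr[Ψ(v)=i ∣ σ] − Pr[Ψ(v)=i ∣ τ]| ≤ C (1−η)^{d_G(v,σ≠τ)}`. -/
theorem SSM_graph_homomorphisms
    (Δ q : ℕ) (hΔ : 3 ≤ Δ) (hq : 2 ≤ q)
    (α : ℝ) (hα0 : 0 < α) (hα1 : α < 2 * Real.pi / (3 * Δ))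
    (η : ℝ) (hη : η ∈ Set.Ioo (0 : ℝ) 1)
    (A : Matrix (Fin q) (Fin q) ℝ) (hsymm : ∀ i j, A i j = A j i)
    (hA : ∀ i j, |A i j - 1| < (1 - η) * (Real.sin (α / 2) * Real.cos (α * Δ / 2))) :
    ∃ C > 0, ∀ (V : Type) (_ : Fintype V) (G : SimpleGraph V), MaxDegLE G Δ →
      ∀ (v : V) (i : Fin q) (Λ : Finset V), v ∉ Λ → ∀ σ τ : V → Fin q,
        ∀ d : ℕ, (∀ u ∈ Λ, σ u ≠ τ u → (d : ℕ∞) ≤ G.edist v u) →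
          |condProb G A Λ σ v i - condProb G A Λ τ v i| ≤ C * (1 - η) ^ d :=
  SSM_graph_homomorphisms_general Δ q hΔ α hα0 hα1 η hη A hA

end GraphHom

end
end

section
/- Let ε > 0 and let P(z) = ∑_{k≥0} a_k z^k and Q(z) = ∑_{k≥0} b_k z^k be holomorphic functions on an open set containing 𝒩([0,1], 2ε) = {z ∈ ℂ : dist(z,[0,1]) ≤ 2ε}, with a_k = b_k for k = 0, …, N for some N ∈ ℕ. If there is M > 0 such that |P(z)| ≤ M and |Q(z)| ≤ M for all z ∈ 𝒩([0,1], 2ε), then, with r = (1 − e^{−1−1/ε})/(1 − e^{−1/ε}) (which satisfies r > 1), one has |P(1) − Q(1)| ≤ 2M/((r−1)·r^N). -/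
/-!
The map `ψ(w) = -ε log(1 - w)` fixes `0`, sends `τ = 1 - e^{-1/ε}` to `1`, and maps the closed
disc of radius `R = 1 - e^{-1-1/ε}` into `𝒩([0,1], 2ε)`: on that disc `log |1 - w|` lies in
`[-1 - 1/ε, 1]` and `|arg (1 - w)| ≤ π/2`. Hence `g = (P - Q) ∘ ψ` is holomorphic on the disc,
bounded by `2M` there, and vanishes to order `N + 1` at `0`. Cauchy's estimates bound its
Taylor coefficients by `2M/Rⁿ`, and the geometric tail of its Taylor series at `τ` gives
`|P(1) - Q(1)| = |g(τ)| ≤ 2M (τ/R)^{N+1} / (1 - τ/R)`, which is the claim with `r = R/τ`.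
-/

/-- The `ε`-neighbourhood `𝒩(S, ε) = {z ∈ ℂ : dist(z, S) ≤ ε}` of a set `S ⊆ ℂ`. -/
def cnbhd (S : Set ℂ) (ε : ℝ) : Set ℂ := {z : ℂ | Metric.infDist z S ≤ ε}

/-- The unit interval `[0,1]` viewed as a subset of `ℂ`. -/
def unitInterval' : Set ℂ := (fun x : ℝ => (x : ℂ)) '' Set.Icc 0 1

open Complex Metric Set
open scoped Nat

theorem iteratedDeriv_comp_eq_zero {𝕜 E : Type*} [NontriviallyNormedField 𝕜] [CharZero 𝕜]
    [NormedAddCommGroup E] [NormedSpace 𝕜 E] [CompleteSpace E] {f : 𝕜 → E} {g : 𝕜 → 𝕜}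
    {z₀ : 𝕜} {N : ℕ} (hf : AnalyticAt 𝕜 f (g z₀)) (hg : AnalyticAt 𝕜 g z₀)
    (hN : ∀ n ≤ N, iteratedDeriv n f (g z₀) = 0) :
    ∀ n ≤ N, iteratedDeriv n (f ∘ g) z₀ = 0 := by
  have hsub : analyticOrderAt (g · - g z₀) z₀ ≠ 0 :=
    (hg.sub analyticAt_const).analyticOrderAt_ne_zero.2 (sub_self _)
  have hle : analyticOrderAt f (g z₀) ≤ analyticOrderAt (f ∘ g) z₀ := by
    rw [hf.analyticOrderAt_comp hg]
    exact le_mul_of_one_le_right' (Order.one_le_iff_ne_zero.2 hsub)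
  simp_rw [← Nat.lt_succ_iff] at hN ⊢
  exact (natCast_le_analyticOrderAt_iff_iteratedDeriv_eq_zero (hf.comp hg)).1
    (((natCast_le_analyticOrderAt_iff_iteratedDeriv_eq_zero hf).2 hN).trans hle)

section TaylorTail

variable {E : Type*} [NormedAddCommGroup E] [NormedSpace ℂ E] [CompleteSpace E]

theorem norm_le_of_iteratedDeriv_eq_zero {f : ℂ → E} {c z : ℂ} {R C : ℝ} {N : ℕ}
    (hf : DiffContOnCl ℂ f (ball c R)) (hC : ∀ w ∈ sphere c R, ‖f w‖ ≤ C)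
    (hN : ∀ n ≤ N, iteratedDeriv n f c = 0) (hz : z ∈ ball c R) :
    ‖f z‖ ≤ C * (‖z - c‖ / R) ^ (N + 1) / (1 - ‖z - c‖ / R) := by
  have hR : 0 < R := pos_of_mem_ball hz
  set ρ := ‖z - c‖ / R
  have hρ1 : ρ < 1 := (div_lt_one hR).2 (mem_ball_iff_norm.1 hz)
  have hterm (n : ℕ) : ‖(n ! : ℂ)⁻¹ • (z - c) ^ n • iteratedDeriv n f c‖ ≤ C * ρ ^ n := by
    have hcauchy := norm_iteratedDeriv_le_of_forall_mem_sphere_norm_le n hR hf hC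
    rw [norm_smul, norm_smul, norm_inv, norm_pow, norm_natCast]
    calc (n ! : ℝ)⁻¹ * (‖z - c‖ ^ n * ‖iteratedDeriv n f c‖)
        ≤ (n ! : ℝ)⁻¹ * (‖z - c‖ ^ n * (n ! * C / R ^ n)) := by gcongr
      _ = C * ρ ^ n := by rw [div_pow]; field_simp
  have htail := (hasSum_nat_add_iff' (N + 1)).2 (hasSum_taylorSeries_on_ball hf.differentiableOn hz)
  rw [Finset.sum_eq_zero fun n hn => by
    rw [hN n (Nat.lt_succ_iff.1 (Finset.mem_range.1 hn)), smul_zero, smul_zero], sub_zero] at htail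
  refine htail.norm_le_of_bounded
    ((hasSum_geometric_of_lt_one (by positivity) hρ1).mul_left (C * ρ ^ (N + 1))) fun m => ?_
  exact (hterm _).trans_eq (by ring)

theorem norm_comp_le_of_iteratedDeriv_eq_zero {f : ℂ → E} {ψ : ℂ → ℂ} {S : Set ℂ}
    {R C : ℝ} {N : ℕ}
    (hf : AnalyticOnNhd ℂ f S) (hψ : ∀ w ∈ closedBall (0 : ℂ) R, AnalyticAt ℂ ψ w)
    (hψS : MapsTo ψ (closedBall 0 R) S) (hC : ∀ z ∈ S, ‖f z‖ ≤ C)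
    (hN : ∀ n ≤ N, iteratedDeriv n f (ψ 0) = 0) {z : ℂ} (hz : ‖z‖ < R) :
    ‖f (ψ z)‖ ≤ C * (‖z‖ / R) ^ (N + 1) / (1 - ‖z‖ / R) := by
  have hR : 0 < R := (norm_nonneg z).trans_lt hz
  have hfψ (w : ℂ) (hw : w ∈ closedBall 0 R) : AnalyticAt ℂ (f ∘ ψ) w :=
    (hf _ (hψS hw)).comp (hψ w hw)
  have hg : DiffContOnCl ℂ (f ∘ ψ) (ball 0 R) := by
    refine DifferentiableOn.diffContOnCl ?_
    rw [closure_ball _ hR.ne']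
    exact fun w hw => (hfψ w hw).differentiableAt.differentiableWithinAt
  simpa using norm_le_of_iteratedDeriv_eq_zero hg
    (fun w hw => hC _ (hψS (sphere_subset_closedBall hw)))
    (iteratedDeriv_comp_eq_zero (hf _ (hψS (mem_closedBall_self hR.le)))
      (hψ 0 (mem_closedBall_self hR.le)) hN)
    (mem_ball_zero_iff.2 hz)

end TaylorTail

theorem mem_cnbhd_unitInterval'_of_re_im {ε : ℝ} (hε : 0 ≤ ε) {z : ℂ}
    (hre : z.re ∈ Icc (-ε) (1 + ε)) (him : |z.im| ≤ Real.pi / 2 * ε) :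
    z ∈ cnbhd unitInterval' (2 * ε) := by
  -- `t` is `re z` clamped to `[0, 1]`; then `‖z - t‖² ≤ ε² + (π/2)² ε² ≤ 4ε²`.
  set t : ℝ := max 0 (min 1 z.re)
  have ht : (t : ℂ) ∈ unitInterval' :=
    ⟨t, ⟨le_max_left _ _, max_le zero_le_one (min_le_left _ _)⟩, rfl⟩
  have hdre : |z.re - t| ≤ ε := by
    rw [abs_le]; constructor <;> cases le_total z.re 0 <;> cases le_total z.re 1 <;>
      simp_all [t] <;> linarith
  have hdist : ‖z - t‖ ^ 2 ≤ (2 * ε) ^ 2 := by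
    have hpi : (Real.pi / 2) ^ 2 ≤ 3 := by nlinarith [Real.pi_lt_d2, Real.pi_pos]
    rw [Complex.sq_norm, normSq_apply, sub_re, sub_im, ofReal_re, ofReal_im, sub_zero]
    nlinarith [sq_abs (z.re - t), sq_abs z.im, abs_nonneg (z.re - t), abs_nonneg z.im,
      mul_le_mul hdre hdre (abs_nonneg _) hε, mul_le_mul him him (abs_nonneg _) (by positivity)]
  exact (infDist_le_dist_of_mem ht).trans
    ((pow_le_pow_iff_left₀ dist_nonneg (by positivity) two_ne_zero).1
      (by rwa [Complex.dist_eq]))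

theorem neg_mul_log_mem_cnbhd {ε : ℝ} (hε : 0 < ε) {ζ : ℂ} (hre : 0 < ζ.re)
    (hlo : Real.exp (-1 - 1 / ε) ≤ ‖ζ‖) (hhi : ‖ζ‖ ≤ Real.exp 1) :
    -(ε : ℂ) * log ζ ∈ cnbhd unitInterval' (2 * ε) := by
  have hζ : 0 < ‖ζ‖ := (Real.exp_pos _).trans_le hlo
  have hlog_lo : -1 - 1 / ε ≤ Real.log ‖ζ‖ := (Real.le_log_iff_exp_le hζ).2 hlo
  have hlog_hi : Real.log ‖ζ‖ ≤ 1 := (Real.log_le_iff_le_exp hζ).2 hhi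
  have harg : |ζ.arg| ≤ Real.pi / 2 := abs_arg_le_pi_div_two_iff.2 hre.le
  apply mem_cnbhd_unitInterval'_of_re_im hε.le
  · simp only [neg_mul, neg_re, re_ofReal_mul, log_re, mem_Icc]
    constructor
    · nlinarith
    · have : -1 - 1 / ε = -(1 + ε) / ε := by field_simp; ring
      rw [this, div_le_iff₀ hε] at hlog_lo
      linarith
  · simp only [neg_mul, neg_im, im_ofReal_mul, log_im, abs_neg, abs_mul, abs_of_pos hε]
    nlinarith

noncomputable def logMap (ε : ℝ) (w : ℂ) : ℂ := -(ε : ℂ) * log (1 - w)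

theorem logMap_zero (ε : ℝ) : logMap ε 0 = 0 := by simp [logMap]

theorem logMap_one_sub_exp {ε : ℝ} (hε : ε ≠ 0) :
    logMap ε ((1 - Real.exp (-(1 / ε)) : ℝ) : ℂ) = 1 := by
  simp only [logMap, ofReal_sub, ofReal_one, sub_sub_cancel, ← ofReal_log (Real.exp_pos _).le,
    Real.log_exp]
  push_cast
  rw [neg_mul_neg, mul_one_div_cancel (ofReal_ne_zero.2 hε)]

theorem analyticAt_logMap (ε : ℝ) {w : ℂ} (hw : ‖w‖ < 1) : AnalyticAt ℂ (logMap ε) w := by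
  refine analyticAt_const.mul ((analyticAt_const.sub analyticAt_id).clog ?_)
  simpa [sub_eq_add_neg] using mem_slitPlane_of_norm_lt_one ((norm_neg w).trans_lt hw)

theorem logMap_mem_cnbhd {ε : ℝ} (hε : 0 < ε) {w : ℂ}
    (hw : ‖w‖ ≤ 1 - Real.exp (-1 - 1 / ε)) : logMap ε w ∈ cnbhd unitInterval' (2 * ε) := by
  have hw1 : ‖w‖ < 1 := hw.trans_lt (sub_lt_self _ (Real.exp_pos _))
  apply neg_mul_log_mem_cnbhd hε
  · rw [sub_re, one_re]
    linarith [re_le_norm w]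
  · linarith [norm_sub_norm_le (1 : ℂ) w, norm_one (α := ℂ)]
  · linarith [norm_sub_le (1 : ℂ) w, norm_one (α := ℂ), Real.add_one_le_exp 1]

theorem bound_strip_general (ε : ℝ) (hε : 0 < ε) (P Q : ℂ → ℂ)
    (U : Set ℂ) (hUopen : IsOpen U) (hUN : cnbhd unitInterval' (2 * ε) ⊆ U)
    (hP : DifferentiableOn ℂ P U) (hQ : DifferentiableOn ℂ Q U)
    (N : ℕ) (hcoef : ∀ k ≤ N, iteratedDeriv k P 0 = iteratedDeriv k Q 0)
    (M : ℝ)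
    (hPb : ∀ z ∈ cnbhd unitInterval' (2 * ε), ‖P z‖ ≤ M)
    (hQb : ∀ z ∈ cnbhd unitInterval' (2 * ε), ‖Q z‖ ≤ M) :
    let r : ℝ := (1 - Real.exp (-1 - 1 / ε)) / (1 - Real.exp (-(1 / ε)))
    1 < r ∧ ‖P 1 - Q 1‖ ≤ 2 * M / ((r - 1) * r ^ N) := by
  intro r
  set R := 1 - Real.exp (-1 - 1 / ε)
  set τ := 1 - Real.exp (-(1 / ε))
  have hτ : 0 < τ := sub_pos.2 (Real.exp_lt_one_iff.2 (by simpa using hε))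
  have hτR : τ < R := sub_lt_sub_left (Real.exp_lt_exp.2 (by linarith)) 1
  have hR : 0 < R := hτ.trans hτR
  have hR1 : R < 1 := sub_lt_self _ (Real.exp_pos _)
  refine ⟨(one_lt_div hτ).2 hτR, ?_⟩
  have hU0 : (0 : ℂ) ∈ U :=
    logMap_zero ε ▸ hUN (logMap_mem_cnbhd hε (by rw [norm_zero]; exact hR.le))
  have hvan (n : ℕ) (hn : n ≤ N) : iteratedDeriv n (P - Q) (logMap ε 0) = 0 := by
    rw [logMap_zero, iteratedDeriv_sub ((hP.analyticOnNhd hUopen 0 hU0).contDiffAt)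
      ((hQ.analyticOnNhd hUopen 0 hU0).contDiffAt), hcoef n hn, sub_self]
  have key := norm_comp_le_of_iteratedDeriv_eq_zero (R := R) (C := 2 * M)
    (((hP.sub hQ).analyticOnNhd hUopen).mono hUN)
    (fun w hw => analyticAt_logMap ε ((mem_closedBall_zero_iff.1 hw).trans_lt hR1))
    (fun w hw => logMap_mem_cnbhd hε (mem_closedBall_zero_iff.1 hw))
    (fun z hz => (norm_sub_le _ _).trans (by linarith [hPb z hz, hQb z hz]))
    hvan (z := τ) (by simpa [abs_of_pos hτ] using hτR)
  rw [logMap_one_sub_exp hε.ne', norm_real, Real.norm_of_nonneg hτ.le, Pi.sub_apply] at key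
  have hRτ : R - τ ≠ 0 := (sub_pos.2 hτR).ne'
  convert key using 1
  rw [show r = R / τ from rfl, div_pow, div_sub_one hτ.ne', one_sub_div hR.ne', div_pow]
  field_simp
  ring

/-- Let `ε > 0` and let `P, Q` be holomorphic on an open set containing
`𝒩([0,1], 2ε)`, with equal Taylor coefficients at `0` up to order `N`, and
`|P|, |Q| ≤ M` on `𝒩([0,1], 2ε)`.  Then, with `r = (1 − e^{−1−1/ε})/(1 − e^{−1/ε})`
(which satisfies `r > 1`), one has `|P(1) − Q(1)| ≤ 2M/((r−1)·r^N)`. -/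
theorem bound_strip (ε : ℝ) (hε : 0 < ε) (P Q : ℂ → ℂ)
    (U : Set ℂ) (hUopen : IsOpen U) (hUN : cnbhd unitInterval' (2 * ε) ⊆ U)
    (hP : DifferentiableOn ℂ P U) (hQ : DifferentiableOn ℂ Q U)
    (N : ℕ) (hcoef : ∀ k ≤ N, iteratedDeriv k P 0 = iteratedDeriv k Q 0)
    (M : ℝ) (hM : 0 < M)
    (hPb : ∀ z ∈ cnbhd unitInterval' (2 * ε), ‖P z‖ ≤ M)
    (hQb : ∀ z ∈ cnbhd unitInterval' (2 * ε), ‖Q z‖ ≤ M) :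
    let r : ℝ := (1 - Real.exp (-1 - 1 / ε)) / (1 - Real.exp (-(1 / ε)))
    1 < r ∧ ‖P 1 - Q 1‖ ≤ 2 * M / ((r - 1) * r ^ N) :=
  bound_strip_general ε hε P Q U hUopen hUN hP hQ N hcoef M hPb hQb
end

section
/- Let δ > 0 and let P(z) = ∑_{k≥0} a_k z^k and Q(z) = ∑_{k≥0} b_k z^k be holomorphic functions on the open set U_δ = ℂ ∖ {x ∈ ℝ : x ≤ −3δ/4}, with a_k = b_k for k = 0, …, N for some N ∈ ℕ. Then there exists a compact set S ⊂ U_δ, containing 0 and 1 and depending only on δ, such that, with r = 1 + √δ and M = sup_{z∈S} max(|P(z)|, |Q(z)|), one has |P(1) − Q(1)| ≤ 2M/((r−1)·r^N). -/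
/-!
Pull `P - Q` back along `h z = δ / (1 - ξ z)² - δ`. For `‖z‖ < ξ⁻¹` the point `w = 1 - ξ z` has
positive real part and `‖w‖ < 2`, so `w²` lies in the slit plane with `‖w²‖ < 4`, which keeps
`δ / w² - δ` off the ray `(-∞, -3δ/4]`; and `ξ` is chosen so that `h 1 = 1`. The pull-back
`g = (P - Q) ∘ h` vanishes to order `N + 1` at `0` (as `h 0 = 0`) and is bounded by `2M` on the
disk of radius `r = 1 + √δ < ξ⁻¹`, so the Schwarz lemma for zeros of order `N + 1` gives
`‖g 1‖ ≤ 2M / r^(N+1) ≤ 2M / ((r - 1) r^N)`.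
-/

open Metric Set Asymptotics
open scoped Topology

/-- The slit domain `U_δ = ℂ ∖ {x ∈ ℝ : x ≤ −3δ/4}`. -/
def slitDomain (δ : ℝ) : Set ℂ := ((fun x : ℝ => (x : ℂ)) '' Set.Iic (-(3 * δ / 4)))ᶜ

lemma isOpen_slitDomain (δ : ℝ) : IsOpen (slitDomain δ) :=
  (Complex.isometry_ofReal.isClosedEmbedding.isClosedMap _ isClosed_Iic).isOpen_compl

section AnalyticOrder

variable {𝕜 E : Type*} [NontriviallyNormedField 𝕜] [NormedAddCommGroup E] [NormedSpace 𝕜 E]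
  {f : 𝕜 → E} {z₀ : 𝕜} {n : ℕ}

lemma le_analyticOrderAt_comp {g : 𝕜 → 𝕜} (hf : AnalyticAt 𝕜 f (g z₀)) (hg : AnalyticAt 𝕜 g z₀) :
    analyticOrderAt f (g z₀) ≤ analyticOrderAt (f ∘ g) z₀ := by
  rw [hf.analyticOrderAt_comp hg]
  refine le_mul_of_one_le_right zero_le (Order.one_le_iff_ne_zero.mpr ?_)
  exact analyticOrderAt_ne_zero.mpr ⟨by fun_prop, sub_self _⟩

lemma lt_analyticOrderAt_sub_of_iteratedDeriv_eq [CharZero 𝕜] [CompleteSpace E] {g : 𝕜 → E}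
    (hf : AnalyticAt 𝕜 f z₀) (hg : AnalyticAt 𝕜 g z₀)
    (h : ∀ k ≤ n, iteratedDeriv k f z₀ = iteratedDeriv k g z₀) :
    (n : ℕ∞) < analyticOrderAt (f - g) z₀ := by
  rw [← ENat.add_one_le_iff (ENat.natCast_ne_top n), ← Nat.cast_add_one,
    natCast_le_analyticOrderAt_iff_iteratedDeriv_eq_zero (hf.sub hg)]
  intro k hk
  rw [iteratedDeriv_sub hf.contDiffAt hg.contDiffAt, h k (Nat.lt_succ_iff.mp hk), sub_self]

lemma isLittleO_pow_of_lt_analyticOrderAt (hn : (n : ℕ∞) < analyticOrderAt f z₀) :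
    f =o[𝓝 z₀] fun z ↦ ‖z - z₀‖ ^ n := by
  have hf : AnalyticAt 𝕜 f z₀ := (analyticOrderAt_ne_zero.mp (ne_bot_of_gt hn)).1
  rw [← ENat.add_one_le_iff (ENat.natCast_ne_top n), ← Nat.cast_add_one,
    natCast_le_analyticOrderAt hf] at hn
  obtain ⟨G, hG, hfG⟩ := hn
  have hpow : (fun z ↦ (z - z₀) ^ n) =O[𝓝 z₀] fun z ↦ ‖z - z₀‖ ^ n :=
    isBigO_of_le _ fun z ↦ by simp [norm_pow]
  have hsmul : (fun z ↦ (z - z₀) • G z) =o[𝓝 z₀] fun _ ↦ (1 : ℝ) := by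
    rw [isLittleO_one_iff]
    have : ContinuousAt (fun z ↦ (z - z₀) • G z) z₀ := by fun_prop
    simpa using this.tendsto
  refine (hpow.smul_isLittleO hsmul).congr' ?_ (by simp)
  filter_upwards [hfG] with z hz
  rw [hz, pow_succ, mul_smul]

end AnalyticOrder

lemma norm_le_mul_div_pow_of_lt_analyticOrderAt {E : Type*} [NormedAddCommGroup E]
    [NormedSpace ℂ E] {f : ℂ → E} {c z : ℂ} {R C : ℝ} {n : ℕ}
    (hd : DifferentiableOn ℂ f (ball c R)) (hC : ∀ w ∈ ball c R, ‖f w‖ ≤ C)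
    (hn : (n : ℕ∞) < analyticOrderAt f c) (hz : z ∈ ball c R) :
    ‖f z‖ ≤ C * (dist z c / R) ^ (n + 1) := by
  have hfc : f c = 0 := apply_eq_zero_of_analyticOrderAt_ne_zero (ne_bot_of_gt hn)
  have hmaps : MapsTo f (ball c R) (closedBall (f c) C) := fun w hw ↦ by
    simpa [hfc] using hC w hw
  simpa [hfc] using Complex.dist_le_mul_div_pow_of_mapsTo_ball_of_isLittleO hd hmaps
    (by simpa [hfc] using isLittleO_pow_of_lt_analyticOrderAt hn) hz

lemma sq_mem_slitPlane {w : ℂ} (hw : 0 < w.re) : w ^ 2 ∈ Complex.slitPlane := by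
  rw [Complex.mem_slitPlane_iff, sq, Complex.mul_re, Complex.mul_im]
  by_cases him : w.im = 0
  · left; simp [him, hw]
  · right; simpa [← two_mul, mul_comm] using And.intro hw.ne' him

lemma div_sub_self_mem_slitDomain {δ : ℝ} (hδ : 0 < δ) {v : ℂ} (hv : v ∈ Complex.slitPlane)
    (hv4 : ‖v‖ < 4) : (δ : ℂ) / v - δ ∈ slitDomain δ := by
  rintro ⟨x, hx, hxv⟩
  have hδv : (δ : ℂ) / v = (x + δ : ℝ) := by push_cast; linear_combination -hxv
  have hv_real : v = (δ / (x + δ) : ℝ) := by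
    rw [← div_div_cancel₀ (Complex.ofReal_ne_zero.mpr hδ.ne') (b := v), hδv]
    push_cast; rfl
  rw [hv_real, Complex.ofReal_mem_slitPlane] at hv
  rw [hv_real, Complex.norm_real, Real.norm_of_nonneg hv.le,
    div_lt_iff₀ ((div_pos_iff_of_pos_left hδ).mp hv)] at hv4
  simp only [mem_Iic] at hx
  linarith

section SlitMap

variable {δ : ℝ} {z : ℂ}

noncomputable def slitScale (δ : ℝ) : ℝ := 1 - Real.sqrt (δ / (1 + δ))

noncomputable def slitMap (δ : ℝ) (z : ℂ) : ℂ := δ / (1 - slitScale δ * z) ^ 2 - δ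

lemma one_sub_slitScale_sq (hδ : 0 < δ) : (1 - slitScale δ) ^ 2 = δ / (1 + δ) := by
  rw [slitScale, sub_sub_cancel, Real.sq_sqrt (by positivity)]

lemma slitScale_pos (hδ : 0 < δ) : 0 < slitScale δ := by
  rw [slitScale, sub_pos, Real.sqrt_lt' one_pos, one_pow, div_lt_one (by positivity)]
  linarith

lemma one_add_sqrt_lt_slitScale_inv (hδ : 0 < δ) : 1 + Real.sqrt δ < (slitScale δ)⁻¹ := by
  rw [← one_div, lt_div_iff₀ (slitScale_pos hδ)]
  have hs := one_sub_slitScale_sq hδ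
  have hs0 : 0 ≤ 1 - slitScale δ := by rw [slitScale, sub_sub_cancel]; positivity
  have ht : Real.sqrt δ ^ 2 = δ := Real.sq_sqrt hδ.le
  have ht0 : 0 < Real.sqrt δ := Real.sqrt_pos.mpr hδ
  field_simp at hs
  set s := 1 - slitScale δ
  set t := Real.sqrt δ
  -- squared, `t < s (1 + t)` reads `t² (1 + t²) < t² (1 + t)²`
  suffices t < s * (1 + t) by nlinarith
  by_contra! h
  nlinarith [mul_le_mul h h (by positivity) ht0.le, mul_pos ht0 ht0]

lemma slitMap_zero : slitMap δ 0 = 0 := by simp [slitMap]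

lemma slitMap_one (hδ : 0 < δ) : slitMap δ 1 = 1 := by
  have hs := one_sub_slitScale_sq hδ
  have : slitMap δ 1 = ((δ / (1 - slitScale δ) ^ 2 - δ : ℝ) : ℂ) := by simp [slitMap]
  rw [this, hs]
  field_simp
  simp

lemma norm_slitScale_mul_lt_one (hδ : 0 < δ) (hz : z ∈ ball (0 : ℂ) (slitScale δ)⁻¹) :
    ‖(slitScale δ : ℂ) * z‖ < 1 := by
  have hξ := slitScale_pos hδ
  rw [mem_ball_zero_iff, ← one_div, lt_div_iff₀ hξ] at hz
  rwa [norm_mul, Complex.norm_real, Real.norm_of_nonneg hξ.le, mul_comm]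

lemma mapsTo_slitMap (hδ : 0 < δ) :
    MapsTo (slitMap δ) (ball 0 (slitScale δ)⁻¹) (slitDomain δ) := fun z hz ↦ by
  have hu := norm_slitScale_mul_lt_one hδ hz
  refine div_sub_self_mem_slitDomain hδ (sq_mem_slitPlane ?_) ?_
  · rw [Complex.sub_re, Complex.one_re]
    linarith [Complex.re_le_norm ((slitScale δ : ℂ) * z)]
  · calc ‖(1 - slitScale δ * z) ^ 2‖ = ‖1 - slitScale δ * z‖ ^ 2 := norm_pow _ _
      _ < 2 ^ 2 := by
        gcongr
        linarith [norm_sub_le (1 : ℂ) ((slitScale δ : ℂ) * z), norm_one (α := ℂ)]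
      _ = 4 := by norm_num

lemma differentiableOn_slitMap (hδ : 0 < δ) :
    DifferentiableOn ℂ (slitMap δ) (ball 0 (slitScale δ)⁻¹) := fun z hz ↦ by
  have hne : 1 - slitScale δ * z ≠ 0 := fun h ↦ by
    simpa [← sub_eq_zero.mp h] using norm_slitScale_mul_lt_one hδ hz
  unfold slitMap
  fun_prop (disch := exact pow_ne_zero 2 hne)

end SlitMap

lemma norm_sub_le_two_mul_sSup {X E : Type*} [TopologicalSpace X] [SeminormedAddCommGroup E]
    {P Q : X → E} {S : Set X} (hS : IsCompact S) (hP : ContinuousOn P S) (hQ : ContinuousOn Q S)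
    {x : X} (hx : x ∈ S) : ‖P x - Q x‖ ≤ 2 * sSup ((fun z ↦ max ‖P z‖ ‖Q z‖) '' S) := by
  have hle : max ‖P x‖ ‖Q x‖ ≤ sSup ((fun z ↦ max ‖P z‖ ‖Q z‖) '' S) :=
    le_csSup (hS.bddAbove_image (hP.norm.sup hQ.norm)) (mem_image_of_mem _ hx)
  calc ‖P x - Q x‖ ≤ ‖P x‖ + ‖Q x‖ := norm_sub_le _ _
    _ ≤ 2 * sSup ((fun z ↦ max ‖P z‖ ‖Q z‖) '' S) := by
      linarith [le_max_left ‖P x‖ ‖Q x‖, le_max_right ‖P x‖ ‖Q x‖]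

/-- Let `δ > 0` and let `P, Q` be holomorphic on
`U_δ = ℂ ∖ {x ∈ ℝ : x ≤ −3δ/4}` with equal Taylor coefficients at `0` up to order `N`.
Then there is a compact set `S ⊆ U_δ` containing `0` and `1` such that, with
`r = 1 + √δ` and `M = sup_{z ∈ S} max(|P(z)|, |Q(z)|)`, one has
`|P(1) − Q(1)| ≤ 2M/((r−1)·r^N)`. -/
theorem bound_slit_plane (δ : ℝ) (hδ : 0 < δ) (P Q : ℂ → ℂ)
    (hP : DifferentiableOn ℂ P (slitDomain δ))
    (hQ : DifferentiableOn ℂ Q (slitDomain δ))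
    (N : ℕ) (hcoef : ∀ k ≤ N, iteratedDeriv k P 0 = iteratedDeriv k Q 0) :
    ∃ S : Set ℂ, IsCompact S ∧ S ⊆ slitDomain δ ∧ (0 : ℂ) ∈ S ∧ (1 : ℂ) ∈ S ∧
      (let r : ℝ := 1 + Real.sqrt δ
       let M : ℝ := sSup ((fun z => max ‖P z‖ ‖Q z‖) '' S)
       ‖P 1 - Q 1‖ ≤ 2 * M / ((r - 1) * r ^ N)) := by
  set r := 1 + Real.sqrt δ
  have hr : 1 < r := lt_add_of_pos_right 1 (Real.sqrt_pos.mpr hδ)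
  have hball : closedBall (0 : ℂ) r ⊆ ball 0 (slitScale δ)⁻¹ :=
    closedBall_subset_ball (one_add_sqrt_lt_slitScale_inv hδ)
  have hmaps := (mapsTo_slitMap hδ).mono_left hball
  have hdiff := (differentiableOn_slitMap hδ).mono hball
  have hS : IsCompact (slitMap δ '' closedBall 0 r) :=
    (isCompact_closedBall 0 r).image_of_continuousOn hdiff.continuousOn
  have h1 : (1 : ℂ) ∈ ball 0 r := by simpa using hr
  refine ⟨slitMap δ '' closedBall 0 r, hS, hmaps.image_subset,
    ⟨0, mem_closedBall_self (by linarith), slitMap_zero⟩,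
    ⟨1, ball_subset_closedBall h1, slitMap_one hδ⟩, ?_⟩
  intro _ M
  set g := (P - Q) ∘ slitMap δ
  have hU : slitDomain δ ∈ 𝓝 (slitMap δ 0) :=
    (isOpen_slitDomain δ).mem_nhds (hmaps (mem_closedBall_self (by linarith)))
  have hg_bound : ∀ z ∈ ball 0 r, ‖g z‖ ≤ 2 * M := fun z hz ↦
    norm_sub_le_two_mul_sSup hS (hP.continuousOn.mono hmaps.image_subset)
      (hQ.continuousOn.mono hmaps.image_subset) (mem_image_of_mem _ (ball_subset_closedBall hz))
  have hg_order : (N : ℕ∞) < analyticOrderAt g 0 := by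
    refine lt_of_lt_of_le ?_ (le_analyticOrderAt_comp ((hP.sub hQ).analyticAt hU)
      (hdiff.analyticAt (closedBall_mem_nhds 0 (by linarith))))
    rw [slitMap_zero] at hU ⊢
    exact lt_analyticOrderAt_sub_of_iteratedDeriv_eq (hP.analyticAt hU) (hQ.analyticAt hU) hcoef
  have hg_diff : DifferentiableOn ℂ g (ball 0 r) :=
    (hP.sub hQ).comp (hdiff.mono ball_subset_closedBall) (hmaps.mono_left ball_subset_closedBall)
  have hM : 0 ≤ M := by linarith [norm_nonneg (g 0), hg_bound 0 (mem_ball_self (by linarith))]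
  calc ‖P 1 - Q 1‖ = ‖g 1‖ := by simp [g, slitMap_one hδ]
    _ ≤ 2 * M * (dist 1 0 / r) ^ (N + 1) :=
      norm_le_mul_div_pow_of_lt_analyticOrderAt hg_diff hg_bound hg_order h1
    _ = 2 * M / (r * r ^ N) := by simp [pow_succ', div_eq_mul_inv, mul_comm]
    _ ≤ 2 * M / ((r - 1) * r ^ N) := by gcongr; linarith
end

section
/- Let G = (V,E) be a finite simple graph, let v ∈ V, let Λ ⊆ V ∖ {v}, let σ and τ be two boundary conditions on Λ, and let d = d_G(v, σ≠τ). Then for every k with 0 ≤ k ≤ d − 1, the Taylor coefficient of order k at λ = 0 of the rational function P_{G[σ],v} equals the Taylor coefficient of order k at λ = 0 of P_{G[τ],v}. -/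
open Finset

noncomputable section

namespace HardCore

open scoped Classical

variable {V : Type*}

/-- `s` is an independent set in the graph `G`. -/
def IsInd (G : SimpleGraph V) (s : Finset V) : Prop :=
  ∀ u ∈ s, ∀ w ∈ s, ¬ G.Adj u w

/-- The independence polynomial of the subgraph of `G` induced on the vertex set `A`,
evaluated at `lam`:  `Z_{G[A]}(lam) = ∑_{I ⊆ A independent} lam^{|I|}`. -/
def Z (R : Type*) [Field R] [Fintype V] (G : SimpleGraph V) (A : Finset V) (lam : R) : R :=
  ∑ s ∈ A.powerset, if IsInd G s then lam ^ s.card else 0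

/-- The closed neighbourhood `N[v]` of a vertex `v` as a `Finset`. -/
def closedNbhd [Fintype V] (G : SimpleGraph V) (v : V) : Finset V :=
  univ.filter fun u => u = v ∨ G.Adj v u

/-- The ratio `P_{G[A],v}(lam) = lam * Z_{G[A] ∖ N[v]}(lam) / Z_{G[A]}(lam)` for the
subgraph of `G` induced on `A`. -/
def ratio {R : Type*} [Field R] [Fintype V] (G : SimpleGraph V) (A : Finset V) (v : V)
    (lam : R) : R :=
  lam * Z R G (A \ closedNbhd G v) lam / Z R G A lam

/-- `σ` is a valid boundary condition on `Λ`: the set of vertices of `Λ` set to `1`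
is independent in the subgraph of `G` induced by `Λ`. -/
def IsBC (G : SimpleGraph V) (Λ : Finset V) (σ : V → Bool) : Prop :=
  ∀ u ∈ Λ, ∀ w ∈ Λ, σ u = true → σ w = true → ¬ G.Adj u w

/-- An independent set `s` is compatible with the boundary condition `σ` on `Λ`:
`σ⁻¹(1) ⊆ s` and `σ⁻¹(0) ∩ s = ∅`. -/
def Compat (Λ : Finset V) (σ : V → Bool) (s : Finset V) : Prop :=
  ∀ u ∈ Λ, (u ∈ s ↔ σ u = true)

/-- The conditional probability `Pr_μ[v ∈ I ∣ σ]` that `v` belongs to the random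
independent set drawn from the hard-core measure at `lam`, conditioned on the
boundary condition `σ` on `Λ`. -/
def condProb [Fintype V] (G : SimpleGraph V) (lam : ℝ) (Λ : Finset V) (σ : V → Bool)
    (v : V) : ℝ :=
  (∑ s : Finset V, if IsInd G s ∧ Compat Λ σ s ∧ v ∈ s then lam ^ s.card else 0) /
  (∑ s : Finset V, if IsInd G s ∧ Compat Λ σ s then lam ^ s.card else 0)

/-- The hard-core measure on `G` at activity `lam` satisfies the strong spatial mixing
bound with constant `C` and exponential rate `r`:  for every vertex `v`, every
`Λ ⊆ V ∖ {v}` and any two boundary conditions `σ, τ` on `Λ`,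
`|Pr[v ∈ I ∣ σ] − Pr[v ∈ I ∣ τ]| ≤ C ⬝ r^{−d_G(v, σ ≠ τ)}`.
(The distance `d_G(v, σ ≠ τ)` is encoded by quantifying over all `d : ℕ` that are a
lower bound, in `ℕ∞`, for the distance from `v` to every vertex at which `σ, τ` differ.) -/
def SSM [Fintype V] (G : SimpleGraph V) (lam : ℝ) (C r : ℝ) : Prop :=
  ∀ (v : V) (Λ : Finset V), v ∉ Λ → ∀ σ τ : V → Bool, IsBC G Λ σ → IsBC G Λ τ →
    ∀ d : ℕ, (∀ u ∈ Λ, σ u ≠ τ u → (d : ℕ∞) ≤ G.edist v u) →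
      |condProb G lam Λ σ v - condProb G lam Λ τ v| ≤ C * r ^ (-(d : ℤ))

/-- `G` has maximum degree at most `Δ`. -/
def MaxDegLE [Fintype V] (G : SimpleGraph V) (Δ : ℕ) : Prop :=
  ∀ v : V, (univ.filter fun u => G.Adj v u).card ≤ Δ

/-- The vertex set of the graph `G[σ]`, i.e. the vertices of `V ∖ Λ` that are not
adjacent to any vertex of `Λ` that is set to `1` by `σ`. -/
def goodSet [Fintype V] (G : SimpleGraph V) (Λ : Finset V) (σ : V → Bool) : Finset V :=
  (univ \ Λ).filter fun u => ∀ w ∈ Λ, σ w = true → ¬ G.Adj w u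

end HardCore

/-! The recursion `Z_A = Z_{A ∖ u} + λ Z_{A ∖ N[u]}` for the independence polynomial `Z_A` of
`G[A]` writes, in formal power series, the ratio `Z_{A ∖ S} / Z_A` as a product over `u ∈ S` of
factors `(1 + λ Z_{C ∖ N[u]} / Z_{C ∖ u})⁻¹`, ratios of the same kind one step further out
(Weitz's recursion). By induction on `k`, the coefficients of `Z_{A ∖ S} / Z_A` up to order `k`
only see the vertices of `A` at distance `< k` from `S`. The vertex sets of `G[σ]` and `G[τ]`
agree at distance `< d - 1` from `v`, so the power series of `P_{G[σ],v} = λ Z_{A ∖ N[v]} / Z_A`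
and of `P_{G[τ],v}` agree up to order `d - 1`. Clearing denominators, the two rational functions
differ by `λ ^ d` times a function analytic at `0`, which has no Taylor coefficient below `d`. -/

open Finset PowerSeries
open scoped Polynomial

theorem PowerSeries.X_pow_dvd_inv_sub_inv {K : Type*} [Field K] {f g : K⟦X⟧} {n : ℕ}
    (hf : constantCoeff f ≠ 0) (hg : constantCoeff g ≠ 0) (h : X ^ n ∣ f - g) :
    X ^ n ∣ f⁻¹ - g⁻¹ := by
  have hfg : f⁻¹ - g⁻¹ = -(f⁻¹ * g⁻¹) * (f - g) := by
    linear_combination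
      g⁻¹ * PowerSeries.mul_inv_cancel f hf - f⁻¹ * PowerSeries.mul_inv_cancel g hg
  rw [hfg]
  exact dvd_mul_of_dvd_right h _

theorem PowerSeries.X_pow_dvd_coe_iff {R : Type*} [CommSemiring R] {p : Polynomial R} {n : ℕ} :
    (X : R⟦X⟧) ^ n ∣ (p : R⟦X⟧) ↔ Polynomial.X ^ n ∣ p := by
  simp only [PowerSeries.X_pow_dvd_iff, Polynomial.X_pow_dvd_iff, Polynomial.coeff_coe]

theorem Polynomial.X_pow_dvd_mul_sub_mul_of_X_pow_dvd {K : Type*} [Field K] {p q p' q' : K[X]}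
    {n : ℕ} (hq : q.coeff 0 ≠ 0) (hq' : q'.coeff 0 ≠ 0)
    (h : PowerSeries.X ^ n ∣ (p : K⟦X⟧) * (q : K⟦X⟧)⁻¹ - (p' : K⟦X⟧) * (q' : K⟦X⟧)⁻¹) :
    Polynomial.X ^ n ∣ p * q' - p' * q := by
  rw [← PowerSeries.X_pow_dvd_coe_iff]
  have hq1 := PowerSeries.mul_inv_cancel (q : K⟦X⟧) (by rwa [constantCoeff_coe])
  have hq1' := PowerSeries.mul_inv_cancel (q' : K⟦X⟧) (by rwa [constantCoeff_coe])
  have hcoe : ((p * q' - p' * q : K[X]) : K⟦X⟧) =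
      ((p : K⟦X⟧) * (q : K⟦X⟧)⁻¹ - (p' : K⟦X⟧) * (q' : K⟦X⟧)⁻¹) * ((q : K⟦X⟧) * q') := by
    push_cast
    linear_combination (-(p : K⟦X⟧) * q') * hq1 + (p' : K⟦X⟧) * q * hq1'
  rw [hcoe]
  exact dvd_mul_of_dvd_left h _

theorem iteratedDeriv_div_eq_of_X_pow_dvd {𝕜 : Type*} [NontriviallyNormedField 𝕜] [CharZero 𝕜]
    [CompleteSpace 𝕜] {p q p' q' : Polynomial 𝕜} {n k : ℕ} (hq : q.eval 0 ≠ 0)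
    (hq' : q'.eval 0 ≠ 0) (h : Polynomial.X ^ n ∣ p * q' - p' * q) (hk : k < n) :
    iteratedDeriv k (fun z => p.eval z / q.eval z) 0 =
      iteratedDeriv k (fun z => p'.eval z / q'.eval z) 0 := by
  obtain ⟨M, hM⟩ := h
  have hpoly (r : Polynomial 𝕜) : AnalyticAt 𝕜 (fun z => r.eval z) 0 :=
    AnalyticOnNhd.eval_polynomial r 0 (Set.mem_univ 0)
  have hf : AnalyticAt 𝕜 (fun z => p.eval z / q.eval z) 0 := (hpoly p).div (hpoly q) hq
  have hf' : AnalyticAt 𝕜 (fun z => p'.eval z / q'.eval z) 0 := (hpoly p').div (hpoly q') hq'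
  have hsub : AnalyticAt 𝕜 (fun z => p.eval z / q.eval z - p'.eval z / q'.eval z) 0 := hf.sub hf'
  have hord :
      (n : ℕ∞) ≤ analyticOrderAt (fun z => p.eval z / q.eval z - p'.eval z / q'.eval z) 0 := by
    rw [natCast_le_analyticOrderAt hsub]
    refine ⟨fun z => M.eval z / (q.eval z * q'.eval z),
      (hpoly M).div ((hpoly q).mul (hpoly q')) (mul_ne_zero hq hq'), ?_⟩
    filter_upwards [q.continuous.continuousAt.eventually_ne hq,
      q'.continuous.continuousAt.eventually_ne hq'] with z hz hz'
    have hMz := congrArg (Polynomial.eval z) hM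
    simp only [Polynomial.eval_sub, Polynomial.eval_mul, Polynomial.eval_pow,
      Polynomial.eval_X] at hMz
    rw [sub_zero, smul_eq_mul]
    field_simp
    linear_combination hMz
  have hzero := (natCast_le_analyticOrderAt_iff_iteratedDeriv_eq_zero hsub).1 hord k hk
  rwa [iteratedDeriv_fun_sub hf.contDiffAt hf'.contDiffAt, sub_eq_zero] at hzero

namespace HardCore

open scoped Classical

section Graph

variable {V : Type*} {G : SimpleGraph V}

theorem isInd_insert_iff {s : Finset V} {u : V} (hu : u ∉ s) :
    IsInd G (insert u s) ↔ IsInd G s ∧ ∀ w ∈ s, ¬ G.Adj u w := by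
  constructor
  · intro h
    exact ⟨fun a ha b hb => h a (mem_insert_of_mem ha) b (mem_insert_of_mem hb),
      fun w hw => h u (mem_insert_self u s) w (mem_insert_of_mem hw)⟩
  · rintro ⟨hs, hsu⟩ a ha b hb
    rcases mem_insert.1 ha with rfl | ha' <;> rcases mem_insert.1 hb with rfl | hb'
    · exact G.irrefl
    · exact hsu b hb'
    · exact fun hab => hsu a ha' hab.symm
    · exact hs a ha' b hb'

def AgreeNear (G : SimpleGraph V) (S : Finset V) (k : ℕ) (A B : Finset V) : Prop :=
  ∀ w, (∃ s ∈ S, G.edist s w < k) → (w ∈ A ↔ w ∈ B)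

theorem AgreeNear.mono {S T A B : Finset V} {k : ℕ} (h : AgreeNear G T k A B) (hST : S ⊆ T) :
    AgreeNear G S k A B := fun w ⟨s, hs, hsw⟩ => h w ⟨s, hST hs, hsw⟩

theorem AgreeNear.sdiff {S A B : Finset V} {k : ℕ} (h : AgreeNear G S k A B) (T : Finset V) :
    AgreeNear G S k (A \ T) (B \ T) := fun w hw => by
  simp only [mem_sdiff, h w hw]

end Graph

section Fintype

variable {V : Type*} [Fintype V] {G : SimpleGraph V}

theorem mem_closedNbhd {u w : V} : w ∈ closedNbhd G u ↔ w = u ∨ G.Adj u w := by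
  simp [closedNbhd]

theorem AgreeNear.closedNbhd {A B : Finset V} {u : V} {k : ℕ}
    (h : AgreeNear G {u} (k + 1) A B) : AgreeNear G (closedNbhd G u) k A B := by
  rintro w ⟨s, hs, hsw⟩
  refine h w ⟨u, mem_singleton_self u, ?_⟩
  have hus : G.edist u s ≤ 1 := by
    rcases mem_closedNbhd.1 hs with rfl | hadj
    · simp
    · exact (SimpleGraph.edist_eq_one_iff_adj.2 hadj).le
  calc G.edist u w ≤ G.edist u s + G.edist s w := SimpleGraph.edist_triangle
    _ ≤ 1 + G.edist s w := by gcongr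
    _ < 1 + k := WithTop.add_lt_add_left ENat.one_ne_top hsw
    _ = (k + 1 : ℕ) := by push_cast; ring

theorem agreeNear_goodSet {Λ : Finset V} {σ τ : V → Bool} {v : V} {d : ℕ}
    (hd : ∀ u ∈ Λ, σ u ≠ τ u → ((d + 1 : ℕ) : ℕ∞) ≤ G.edist v u) :
    AgreeNear G {v} d (goodSet G Λ σ) (goodSet G Λ τ) := by
  rintro w ⟨s, hs, hsw⟩
  rw [mem_singleton.1 hs] at hsw
  have hagree : ∀ x ∈ Λ, G.Adj x w → σ x = τ x := by
    intro x hx hadj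
    by_contra hne
    have := calc ((d + 1 : ℕ) : ℕ∞) ≤ G.edist v x := hd x hx hne
      _ ≤ G.edist v w + G.edist w x := SimpleGraph.edist_triangle
      _ = G.edist v w + 1 := by rw [SimpleGraph.edist_eq_one_iff_adj.2 hadj.symm]
      _ < d + 1 := WithTop.add_lt_add_right ENat.one_ne_top hsw
    push_cast at this
    exact lt_irrefl _ this
  simp only [goodSet, mem_filter]
  refine and_congr_right fun _ => forall₂_congr fun x hx => ?_
  by_cases hadj : G.Adj x w
  · rw [hagree x hx hadj]
  · simp [hadj]

end Fintype

section IndepPoly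

variable {V : Type*} (R : Type*) [CommSemiring R] (G : SimpleGraph V)

def indepPoly (A : Finset V) : R[X] :=
  ∑ s ∈ A.powerset, if IsInd G s then Polynomial.X ^ s.card else 0

@[simp]
theorem coeff_zero_indepPoly (A : Finset V) : (indepPoly R G A).coeff 0 = 1 := by
  rw [indepPoly, Polynomial.finsetSum_coeff, sum_eq_single ∅]
  · simp [IsInd]
  · intro s _ hs
    have : s.card ≠ 0 := card_ne_zero.2 (nonempty_iff_ne_empty.2 hs)
    split_ifs <;> simp [Polynomial.coeff_X_pow, this.symm]
  · simp

theorem indepPoly_eq_erase_add [Fintype V] {A : Finset V} {u : V} (hu : u ∈ A) :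
    indepPoly R G A =
      indepPoly R G (A.erase u) + Polynomial.X * indepPoly R G (A \ closedNbhd G u) := by
  conv_lhs => rw [indepPoly, ← insert_erase hu, sum_powerset_insert (notMem_erase u A)]
  congr 1
  rw [indepPoly, mul_sum]
  symm
  have hsub : A \ closedNbhd G u ⊆ A.erase u := fun w hw => by
    rw [mem_sdiff, mem_closedNbhd, not_or] at hw
    exact mem_erase.2 ⟨hw.2.1, hw.1⟩
  have hvanish : ∀ t ∈ (A.erase u).powerset, t ∉ (A \ closedNbhd G u).powerset →
      (if IsInd G (insert u t) then (Polynomial.X : R[X]) ^ (insert u t).card else 0) = 0 := by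
    intro t ht hnot
    rw [mem_powerset] at ht hnot
    obtain ⟨w, hwt, hw⟩ := not_subset.1 hnot
    have hwA := mem_erase.1 (ht hwt)
    have hadj : G.Adj u w := by
      simpa [mem_sdiff, mem_closedNbhd, hwA.1, hwA.2] using hw
    have hut : u ∉ t := fun hu => (mem_erase.1 (ht hu)).1 rfl
    exact if_neg fun hind => ((isInd_insert_iff hut).1 hind).2 w hwt hadj
  rw [← sum_subset (powerset_mono.2 hsub) hvanish]
  refine sum_congr rfl fun t ht => ?_
  have hut : u ∉ t := fun hu =>
    (mem_sdiff.1 (mem_powerset.1 ht hu)).2 (mem_closedNbhd.2 (.inl rfl))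
  have hnadj : ∀ w ∈ t, ¬ G.Adj u w := fun w hw hadj =>
    (mem_sdiff.1 (mem_powerset.1 ht hw)).2 (mem_closedNbhd.2 (.inr hadj))
  have hind : IsInd G (insert u t) ↔ IsInd G t :=
    (isInd_insert_iff hut).trans (and_iff_left hnadj)
  simp only [hind, card_insert_of_notMem hut, pow_succ', mul_ite, mul_zero]

theorem eval_indepPoly [Fintype V] (K : Type*) [Field K] (A : Finset V) (x : K) :
    (indepPoly K G A).eval x = Z K G A x := by
  simp only [indepPoly, Z, Polynomial.eval_finsetSum, apply_ite (Polynomial.eval x),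
    Polynomial.eval_pow, Polynomial.eval_X, Polynomial.eval_zero]

theorem ratio_eq_eval [Fintype V] (K : Type*) [Field K] (A : Finset V) (v : V) (x : K) :
    ratio G A v x =
      (Polynomial.X * indepPoly K G (A \ closedNbhd G v)).eval x / (indepPoly K G A).eval x := by
  simp only [ratio, Polynomial.eval_mul, Polynomial.eval_X, eval_indepPoly]

end IndepPoly

section SdiffRatio

variable {V : Type*} (K : Type*) [Field K] (G : SimpleGraph V)

def sdiffRatio (A S : Finset V) : K⟦X⟧ :=
  (indepPoly K G (A \ S) : K⟦X⟧) * (indepPoly K G A : K⟦X⟧)⁻¹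

theorem indepPoly_mul_inv (A : Finset V) :
    (indepPoly K G A : K⟦X⟧) * (indepPoly K G A : K⟦X⟧)⁻¹ = 1 :=
  PowerSeries.mul_inv_cancel _ (by simp)

theorem constantCoeff_sdiffRatio (A S : Finset V) : constantCoeff (sdiffRatio K G A S) = 1 := by
  simp [sdiffRatio]

theorem sdiffRatio_empty (A : Finset V) : sdiffRatio K G A ∅ = 1 := by
  rw [sdiffRatio, sdiff_empty, indepPoly_mul_inv]

theorem sdiffRatio_singleton_of_notMem {A : Finset V} {u : V} (hu : u ∉ A) :
    sdiffRatio K G A {u} = 1 := by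
  rw [sdiffRatio, sdiff_singleton_eq_erase, erase_eq_of_notMem hu, indepPoly_mul_inv]

theorem sdiffRatio_insert (A S : Finset V) (u : V) :
    sdiffRatio K G A (insert u S) = sdiffRatio K G (A \ S) {u} * sdiffRatio K G A S := by
  rw [sdiffRatio, sdiffRatio, sdiffRatio, sdiff_insert, sdiff_singleton_eq_erase]
  linear_combination (-(indepPoly K G ((A \ S).erase u) : K⟦X⟧) * (indepPoly K G A : K⟦X⟧)⁻¹) *
    indepPoly_mul_inv K G (A \ S)

theorem sdiffRatio_singleton_of_mem [Fintype V] {A : Finset V} {u : V} (hu : u ∈ A) :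
    sdiffRatio K G A {u} = (1 + X * sdiffRatio K G (A \ {u}) (closedNbhd G u))⁻¹ := by
  have hN : (A \ {u}) \ closedNbhd G u = A \ closedNbhd G u := by
    ext w
    simp only [mem_sdiff, mem_singleton, mem_closedNbhd]
    tauto
  have hZ := congrArg (fun p : K[X] => (p : K⟦X⟧)) (indepPoly_eq_erase_add K G hu)
  simp only [Polynomial.coe_add, Polynomial.coe_mul, Polynomial.coe_X] at hZ
  rw [eq_inv_iff_mul_eq_one (by simp [sdiffRatio]), sdiffRatio, sdiffRatio, hN,
    sdiff_singleton_eq_erase]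
  linear_combination indepPoly_mul_inv K G A - (indepPoly K G A : K⟦X⟧)⁻¹ * hZ +
    X * (indepPoly K G (A \ closedNbhd G u) : K⟦X⟧) * (indepPoly K G A : K⟦X⟧)⁻¹ *
      indepPoly_mul_inv K G (A.erase u)

theorem X_pow_dvd_sdiffRatio_sub [Fintype V] (k : ℕ) {S A B : Finset V}
    (h : AgreeNear G S k A B) : X ^ (k + 1) ∣ sdiffRatio K G A S - sdiffRatio K G B S := by
  induction k generalizing S A B with
  | zero =>
    rw [zero_add, pow_one, X_dvd_iff, map_sub, constantCoeff_sdiffRatio, constantCoeff_sdiffRatio,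
      sub_self]
  | succ k ih =>
    have hsingle {C D : Finset V} {u : V} (h : AgreeNear G {u} (k + 1) C D) :
        X ^ (k + 1 + 1) ∣ sdiffRatio K G C {u} - sdiffRatio K G D {u} := by
      by_cases hu : u ∈ C
      · have huD : u ∈ D := (h u ⟨u, mem_singleton_self u, by simp⟩).1 hu
        rw [sdiffRatio_singleton_of_mem K G hu, sdiffRatio_singleton_of_mem K G huD]
        refine X_pow_dvd_inv_sub_inv (by simp [sdiffRatio]) (by simp [sdiffRatio]) ?_
        rw [add_sub_add_left_eq_sub, ← mul_sub, pow_succ']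
        exact mul_dvd_mul_left X (ih (h.closedNbhd.sdiff {u}))
      · have huD : u ∉ D := fun huD => hu ((h u ⟨u, mem_singleton_self u, by simp⟩).2 huD)
        rw [sdiffRatio_singleton_of_notMem K G hu, sdiffRatio_singleton_of_notMem K G huD,
          sub_self]
        exact dvd_zero _
    induction S using Finset.induction_on generalizing A B with
    | empty => simp [sdiffRatio_empty]
    | insert u S _ ihS =>
      rw [sdiffRatio_insert, sdiffRatio_insert]
      have hnear := (h.mono (singleton_subset_iff.2 (mem_insert_self u S))).sdiff S
      exact dvd_mul_sub_mul (hsingle hnear) (ihS (h.mono (subset_insert u S)))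

theorem X_pow_dvd_ratio_sub [Fintype V] {A B : Finset V} {v : V} {k : ℕ}
    (h : AgreeNear G {v} k A B) :
    X ^ (k + 1) ∣
      ((Polynomial.X * indepPoly K G (A \ closedNbhd G v) : K[X]) : K⟦X⟧) *
          (indepPoly K G A : K⟦X⟧)⁻¹ -
        ((Polynomial.X * indepPoly K G (B \ closedNbhd G v) : K[X]) : K⟦X⟧) *
          (indepPoly K G B : K⟦X⟧)⁻¹ := by
  simp only [Polynomial.coe_mul, Polynomial.coe_X, mul_assoc]
  rw [← mul_sub, pow_succ']
  cases k with
  | zero => simp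
  | succ k => exact mul_dvd_mul_left X (X_pow_dvd_sdiffRatio_sub K G k h.closedNbhd)

end SdiffRatio

theorem ratio_coeffs_agree_general {V : Type*} [Fintype V] (G : SimpleGraph V) (v : V)
    (Λ : Finset V) (σ τ : V → Bool)
    (d : ℕ) (hd : ∀ u ∈ Λ, σ u ≠ τ u → (d : ℕ∞) ≤ G.edist v u) :
    ∀ k < d,
      iteratedDeriv k (fun lam : ℂ => ratio G (goodSet G Λ σ) v lam) 0 =
      iteratedDeriv k (fun lam : ℂ => ratio G (goodSet G Λ τ) v lam) 0 := by
  intro k hk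
  obtain ⟨m, rfl⟩ : ∃ m, d = m + 1 := ⟨d - 1, by omega⟩
  simp only [ratio_eq_eval G ℂ]
  refine iteratedDeriv_div_eq_of_X_pow_dvd (by simp [← Polynomial.coeff_zero_eq_eval_zero])
    (by simp [← Polynomial.coeff_zero_eq_eval_zero]) ?_ hk
  exact Polynomial.X_pow_dvd_mul_sub_mul_of_X_pow_dvd (by simp) (by simp)
    (X_pow_dvd_ratio_sub ℂ G (agreeNear_goodSet hd))

/-- Let `G` be a finite graph, `v` a vertex, `Λ ⊆ V ∖ {v}`, let `σ, τ` be
two boundary conditions on `Λ` and let `d = d_G(v, σ ≠ τ)`.  Then for every `k ≤ d − 1`,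
the order-`k` Taylor coefficients at `λ = 0` of `P_{G[σ],v}` and of `P_{G[τ],v}` agree. -/
theorem ratio_coeffs_agree {V : Type*} [Fintype V] (G : SimpleGraph V) (v : V)
    (Λ : Finset V) (hv : v ∉ Λ) (σ τ : V → Bool) (hσ : IsBC G Λ σ) (hτ : IsBC G Λ τ)
    (d : ℕ) (hd : ∀ u ∈ Λ, σ u ≠ τ u → (d : ℕ∞) ≤ G.edist v u) :
    ∀ k < d,
      iteratedDeriv k (fun lam : ℂ => ratio G (goodSet G Λ σ) v lam) 0 =
      iteratedDeriv k (fun lam : ℂ => ratio G (goodSet G Λ τ) v lam) 0 :=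
  ratio_coeffs_agree_general G v Λ σ τ d hd

end HardCore

end
end

section
/- Let q ≥ 2 be an integer, let A be a symmetric q×q complex matrix, let G = (V,E) be a finite simple graph, and let σ : Λ → [q] be a boundary condition on Λ ⊆ V. Let Γ be the graph whose vertices are the connected subgraphs H = (S,F) of G with at least one edge, with H₁ = (S₁,F₁) and H₂ = (S₂,F₂) adjacent iff S₁ ∩ S₂ ≠ ∅ (and H₁ ≠ H₂). For a complex variable z and external fields ξ ∈ ℂ^{V×[q]}, define the weight w^σ(H) = z^{|F|} · Z^σ_H(A−J, ξ) / ((∏_{v ∈ S∖Λ} ∑_{i=1}^q ξ_{v,i}) · ∏_{v ∈ Λ∩S} ξ_{v,σ(v)}) (σ restricted to Λ∩S), and set p^σ(ξ) = (∏_{v ∈ V∖Λ} ∑_{i=1}^q ξ_{v,i}) · ∏_{v ∈ Λ} ξ_{v,σ(v)}. Then, as an identity of rational functions in z and ξ (valid whenever all denominators are nonzero), p^σ(ξ) · Z_Γ(w^σ) = Z^σ_G(J + z(A−J), ξ). -/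
/-!
Expanding `∏_{uv ∈ E} (1 + z (A − J)_{ψ(u)ψ(v)})` writes `Z^σ_G(J + z(A − J), ξ)` as a sum over
edge sets `F ⊆ E` of `z^{|F|}` times the partition function of `(V, F)` with matrix `A − J`.
For fixed `F` the colourings of different connected components of `F`, and of the vertices that
`F` does not cover, are independent, so that partition function factorises: each component `H`
contributes `Z^σ_H(A − J, ξ)`, and each uncovered vertex `v` contributes `∑_i ξ_{v,i}`, or
`ξ_{v,σ(v)}` if `v ∈ Λ`. These vertex factors are exactly what `p^σ(ξ)` supplies and the weights
`w^σ(H)` divide out. Finally `F ↦ {components of F}` is a bijection from the edge sets of `G` onto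
the families of pairwise vertex-disjoint polymers, i.e. the independent sets of `Γ`.
-/

open Finset

noncomputable section

namespace GraphHom
open scoped Classical

/-- The graph homomorphism partition function with external fields `ξ` and boundary
condition `σ` on `Λ`. -/
def Zext {R : Type*} [Field R] {V : Type*} {q : ℕ} [Fintype V] (G : SimpleGraph V)
    (B : Matrix (Fin q) (Fin q) R) (Λ : Finset V) (σ : V → Fin q)
    (ξ : V → Fin q → R) : R :=
  ∑ ψ : V → Fin q, if ∀ u ∈ Λ, ψ u = σ u then
      (∏ v, ξ v (ψ v)) * ∏ e ∈ edges G, edgeWeight B ψ e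
    else 0

variable [Fintype V]

/-- The support of a finite set of edges: all vertices covered by some edge. -/
def edgeSupp (F : Finset (Sym2 V)) : Finset V :=
  univ.filter fun v => ∃ e ∈ F, v ∈ e

/-- `F` determines a connected subgraph `H = (S, F)` of `G` with at least one edge,
where `S = edgeSupp F` (a connected subgraph with an edge is determined by its edge set). -/
def IsPolymer (G : SimpleGraph V) (F : Finset (Sym2 V)) : Prop :=
  F.Nonempty ∧ (F : Set (Sym2 V)) ⊆ G.edgeSet ∧
    ∀ u ∈ edgeSupp F, ∀ w ∈ edgeSupp F,
      (SimpleGraph.fromEdgeSet (F : Set (Sym2 V))).Reachable u w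

/-- The partition function `Z^σ_H(B, ξ)` of the subgraph `H = (S, F)` of `G`, with
boundary condition `σ` restricted to `Λ ∩ S`:  the sum runs over colorings of `S`
(encoded as colorings of `V` pinned to `σ` off `S`), with external-field weights taken
over the vertices of `S` only. -/
def Zsub {q : ℕ} (B : Matrix (Fin q) (Fin q) ℂ) (S : Finset V) (F : Finset (Sym2 V))
    (Λ : Finset V) (σ : V → Fin q) (ξ : V → Fin q → ℂ) : ℂ :=
  ∑ ψ : V → Fin q,
    if (∀ u ∈ Λ ∩ S, ψ u = σ u) ∧ (∀ u ∉ S, ψ u = σ u) then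
      (∏ v ∈ S, ξ v (ψ v)) * ∏ e ∈ F, edgeWeight B ψ e
    else 0

/-- The weight `w^σ(H)` of the polymer `H = (S, F)`, `S = edgeSupp F`:
`w^σ(H) = z^{|F|} Z^σ_H(A−J, ξ) / ((∏_{v ∈ S∖Λ} ∑_i ξ_{v,i}) ∏_{v ∈ Λ∩S} ξ_{v,σ(v)})`. -/
def polymerWeight {q : ℕ} (A : Matrix (Fin q) (Fin q) ℂ) (z : ℂ) (Λ : Finset V)
    (σ : V → Fin q) (ξ : V → Fin q → ℂ) (F : Finset (Sym2 V)) : ℂ :=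
  z ^ F.card * Zsub (fun i j => A i j - 1) (edgeSupp F) F Λ σ ξ /
    ((∏ v ∈ edgeSupp F \ Λ, ∑ i, ξ v i) * ∏ v ∈ Λ ∩ edgeSupp F, ξ v (σ v))

/-- `p^σ(ξ) = (∏_{v ∈ V∖Λ} ∑_i ξ_{v,i}) · ∏_{v ∈ Λ} ξ_{v,σ(v)}`. -/
def pBC {q : ℕ} (Λ : Finset V) (σ : V → Fin q) (ξ : V → Fin q → ℂ) : ℂ :=
  (∏ v ∈ univ \ Λ, ∑ i, ξ v i) * ∏ v ∈ Λ, ξ v (σ v)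

/-- The multivariate independence polynomial `Z_Γ(w)` of the polymer graph `Γ` of `G`:
vertices of `Γ` are the polymers of `G` (connected subgraphs with at least one edge),
two polymers being adjacent iff their vertex sets intersect; independent sets of `Γ`
are families of pairwise vertex-disjoint polymers. -/
def Zpolymer (G : SimpleGraph V) (w : Finset (Sym2 V) → ℂ) : ℂ :=
  ∑ 𝒥 : Finset (Finset (Sym2 V)),
    if (∀ F ∈ 𝒥, IsPolymer G F) ∧
        (∀ F₁ ∈ 𝒥, ∀ F₂ ∈ 𝒥, F₁ ≠ F₂ → Disjoint (edgeSupp F₁) (edgeSupp F₂)) then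
      ∏ F ∈ 𝒥, w F
    else 0


section PinnedSum

variable {κ R : Type*} [Fintype κ] [DecidableEq κ] [CommSemiring R]

def pinnedSum (σ : V → κ) (T : Finset V) (f : (V → κ) → R) : R :=
  ∑ ψ ∈ univ.filter (fun ψ => ∀ v ∉ T, ψ v = σ v), f ψ

theorem pinnedSum_empty (σ : V → κ) (f : (V → κ) → R) : pinnedSum σ ∅ f = f σ := by
  rw [pinnedSum, sum_eq_single_of_mem σ (by simp)]
  intro ψ hψ hne
  exact absurd (funext fun v => (mem_filter.mp hψ).2 v (notMem_empty v)) hne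

theorem pinnedSum_singleton (σ : V → κ) (a : V) (g : κ → R) :
    pinnedSum σ {a} (fun ψ => g (ψ a)) = ∑ i, g i := by
  refine sum_nbij' (fun ψ => ψ a) (Function.update σ a) (by simp) ?_ ?_ (by simp) (by simp)
  · intro i _
    simp +contextual [Function.update_of_ne]
  · intro ψ hψ
    have hψ' : ∀ v, v ≠ a → ψ v = σ v := by simpa using hψ
    funext v
    by_cases hv : v = a
    · subst hv; simp
    · simp [Function.update_of_ne hv, hψ' v hv]

theorem pinnedSum_union {T₁ T₂ : Finset V} (hT : Disjoint T₁ T₂) {f₁ f₂ : (V → κ) → R}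
    (hf₁ : DependsOn f₁ (↑T₂)ᶜ) (hf₂ : DependsOn f₂ (↑T₁)ᶜ) (σ : V → κ) :
    pinnedSum σ (T₁ ∪ T₂) (fun ψ => f₁ ψ * f₂ ψ) = pinnedSum σ T₁ f₁ * pinnedSum σ T₂ f₂ := by
  rw [pinnedSum, pinnedSum, pinnedSum, sum_mul_sum, ← sum_product']
  refine sum_nbij' (fun ψ => (T₁.piecewise ψ σ, T₂.piecewise ψ σ))
    (fun p => T₁.piecewise p.1 p.2) ?_ ?_ ?_ ?_ ?_
  · intro ψ _
    simp +contextual [piecewise_eq_of_notMem]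
  · rintro ⟨ψ₁, ψ₂⟩ hp
    simp only [mem_product, mem_filter, mem_univ, true_and] at hp ⊢
    intro v hv
    simp [piecewise_eq_of_notMem _ _ _ (fun h => hv (mem_union_left _ h)),
      hp.2 v (fun h => hv (mem_union_right _ h))]
  · intro ψ hψ
    have hψ' : ∀ v ∉ T₁ ∪ T₂, ψ v = σ v := (mem_filter.mp hψ).2
    funext v
    by_cases h₁ : v ∈ T₁
    · simp [h₁]
    by_cases h₂ : v ∈ T₂
    · simp [h₁, h₂]
    · simp [h₁, h₂, hψ' v (by simp [h₁, h₂])]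
  · rintro ⟨ψ₁, ψ₂⟩ hp
    simp only [mem_product, mem_filter, mem_univ, true_and] at hp
    refine Prod.ext (funext fun v => ?_) (funext fun v => ?_)
    · by_cases h₁ : v ∈ T₁
      · simp [h₁]
      · simp [h₁, hp.1 v h₁]
    · by_cases h₂ : v ∈ T₂
      · simp [h₂, disjoint_right.mp hT h₂]
      · simp [h₂, hp.2 v h₂]
  · intro ψ hψ
    have hψ' : ∀ v ∉ T₁ ∪ T₂, ψ v = σ v := (mem_filter.mp hψ).2
    congr 1
    · refine hf₁ fun v hv => ?_
      by_cases h₁ : v ∈ T₁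
      · simp [h₁]
      · simp [h₁, hψ' v (by simp_all)]
    · refine hf₂ fun v hv => ?_
      by_cases h₂ : v ∈ T₂
      · simp [h₂]
      · simp [h₂, hψ' v (by simp_all)]

end PinnedSum

section Zsub

variable {q : ℕ}

theorem mem_edgeSupp {F : Finset (Sym2 V)} {v : V} : v ∈ edgeSupp F ↔ ∃ e ∈ F, v ∈ e := by
  simp [edgeSupp]

theorem edgeSupp_biUnion {ι : Type*} (I : Finset ι) (F : ι → Finset (Sym2 V)) :
    edgeSupp (I.biUnion F) = I.biUnion fun i => edgeSupp (F i) := by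
  ext v
  simp only [mem_edgeSupp, mem_biUnion]
  tauto

theorem disjoint_of_disjoint_edgeSupp {F₁ F₂ : Finset (Sym2 V)}
    (h : Disjoint (edgeSupp F₁) (edgeSupp F₂)) : Disjoint F₁ F₂ := by
  refine disjoint_left.mpr fun e he₁ he₂ => ?_
  obtain ⟨v, hv⟩ : ∃ v, v ∈ e := ⟨_, e.out_fst_mem⟩
  exact disjoint_left.mp h (mem_edgeSupp.mpr ⟨e, he₁, hv⟩) (mem_edgeSupp.mpr ⟨e, he₂, hv⟩)

omit [Fintype V] in
theorem edgeWeight_one_add_mul {R : Type*} [Field R] [NeZero (2 : R)]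
    (B : Matrix (Fin q) (Fin q) R) (z : R) (ψ : V → Fin q) (e : Sym2 V) :
    edgeWeight (fun i j => 1 + z * B i j) ψ e = 1 + z * edgeWeight B ψ e := by
  induction e with
  | _ a b =>
    simp only [edgeWeight, Sym2.lift_mk]
    field_simp
    ring

omit [Fintype V] in
theorem dependsOn_edgeWeight {R : Type*} [Field R] (B : Matrix (Fin q) (Fin q) R) (e : Sym2 V) :
    DependsOn (fun ψ => edgeWeight B ψ e) {v | v ∈ e} := by
  induction e with
  | _ a b =>
    intro ψ ψ' h
    simp only [edgeWeight, Sym2.lift_mk, h a (Sym2.mem_mk_left a b),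
      h b (Sym2.mem_mk_right a b)]

theorem dependsOn_subgraphWeight (B : Matrix (Fin q) (Fin q) ℂ) (ξ : V → Fin q → ℂ)
    {S : Finset V} {F : Finset (Sym2 V)} (hF : edgeSupp F ⊆ S) :
    DependsOn (fun ψ => (∏ v ∈ S, ξ v (ψ v)) * ∏ e ∈ F, edgeWeight B ψ e) ↑S := by
  intro ψ ψ' h
  refine congrArg₂ _ (prod_congr rfl fun v hv => by rw [h v hv]) (prod_congr rfl fun e he => ?_)
  exact dependsOn_edgeWeight B e fun v hv => h v (hF (mem_edgeSupp.mpr ⟨e, he, hv⟩))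

theorem Zsub_eq_pinnedSum (B : Matrix (Fin q) (Fin q) ℂ) (S : Finset V) (F : Finset (Sym2 V))
    (Λ : Finset V) (σ : V → Fin q) (ξ : V → Fin q → ℂ) :
    Zsub B S F Λ σ ξ =
      pinnedSum σ (S \ Λ) fun ψ => (∏ v ∈ S, ξ v (ψ v)) * ∏ e ∈ F, edgeWeight B ψ e := by
  rw [Zsub, pinnedSum, sum_filter]
  refine sum_congr rfl fun ψ _ => if_congr ?_ rfl rfl
  simp only [mem_inter, mem_sdiff, not_and, not_not]
  exact ⟨fun h v hv => if hS : v ∈ S then h.1 v ⟨hv hS, hS⟩ else h.2 v hS,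
    fun h => ⟨fun v hv => h v fun _ => hv.1, fun v hv => h v fun hS => absurd hS hv⟩⟩

theorem Zsub_union (B : Matrix (Fin q) (Fin q) ℂ) {S₁ S₂ : Finset V} {F₁ F₂ : Finset (Sym2 V)}
    (hS : Disjoint S₁ S₂) (hF₁ : edgeSupp F₁ ⊆ S₁) (hF₂ : edgeSupp F₂ ⊆ S₂)
    (Λ : Finset V) (σ : V → Fin q) (ξ : V → Fin q → ℂ) :
    Zsub B (S₁ ∪ S₂) (F₁ ∪ F₂) Λ σ ξ = Zsub B S₁ F₁ Λ σ ξ * Zsub B S₂ F₂ Λ σ ξ := by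
  have hF : Disjoint F₁ F₂ := disjoint_of_disjoint_edgeSupp (hS.mono hF₁ hF₂)
  simp only [Zsub_eq_pinnedSum, union_sdiff_distrib, prod_union hS, prod_union hF]
  rw [← pinnedSum_union (hS.mono sdiff_subset sdiff_subset)
    ((dependsOn_subgraphWeight B ξ hF₁).mono ?_) ((dependsOn_subgraphWeight B ξ hF₂).mono ?_)]
  · congr 1
    funext ψ
    ring
  · exact fun v hv hv₂ => disjoint_left.mp hS hv (mem_sdiff.mp hv₂).1
  · exact fun v hv hv₁ => disjoint_right.mp hS hv (mem_sdiff.mp hv₁).1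

theorem Zsub_biUnion (B : Matrix (Fin q) (Fin q) ℂ) {ι : Type*} (I : Finset ι)
    {S : ι → Finset V} {F : ι → Finset (Sym2 V)} (hS : (I : Set ι).PairwiseDisjoint S)
    (hF : ∀ i ∈ I, edgeSupp (F i) ⊆ S i) (Λ : Finset V) (σ : V → Fin q) (ξ : V → Fin q → ℂ) :
    Zsub B (I.biUnion S) (I.biUnion F) Λ σ ξ = ∏ i ∈ I, Zsub B (S i) (F i) Λ σ ξ := by
  induction I using Finset.induction with
  | empty => simp [Zsub_eq_pinnedSum, pinnedSum_empty]
  | insert a I ha ih =>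
    rw [coe_insert, Set.pairwiseDisjoint_insert_of_notMem (mem_coe.not.mpr ha)] at hS
    have hI : ∀ i ∈ I, edgeSupp (F i) ⊆ S i := fun i hi => hF i (mem_insert_of_mem hi)
    rw [biUnion_insert, biUnion_insert, prod_insert ha, ← ih hS.1 hI]
    refine Zsub_union B ((disjoint_biUnion_right _ _ _).mpr hS.2) (hF a (mem_insert_self a I))
      ?_ Λ σ ξ
    rw [edgeSupp_biUnion]
    exact biUnion_mono hI

end Zsub

section FieldWeight

variable {q : ℕ}

def fieldWeight (Λ : Finset V) (σ : V → Fin q) (ξ : V → Fin q → ℂ) (v : V) : ℂ :=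
  if v ∈ Λ then ξ v (σ v) else ∑ i, ξ v i

omit [Fintype V] in
theorem prod_fieldWeight (S Λ : Finset V) (σ : V → Fin q) (ξ : V → Fin q → ℂ) :
    ∏ v ∈ S, fieldWeight Λ σ ξ v = (∏ v ∈ S \ Λ, ∑ i, ξ v i) * ∏ v ∈ Λ ∩ S, ξ v (σ v) := by
  simp only [fieldWeight]
  rw [prod_ite, filter_mem_eq_inter, filter_notMem_eq_sdiff, inter_comm, mul_comm]

theorem pBC_eq_prod_fieldWeight (Λ : Finset V) (σ : V → Fin q) (ξ : V → Fin q → ℂ) :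
    pBC Λ σ ξ = ∏ v, fieldWeight Λ σ ξ v := by
  rw [prod_fieldWeight, inter_univ, pBC]

theorem Zsub_singleton_empty (B : Matrix (Fin q) (Fin q) ℂ) (v : V) (Λ : Finset V)
    (σ : V → Fin q) (ξ : V → Fin q → ℂ) :
    Zsub B {v} ∅ Λ σ ξ = fieldWeight Λ σ ξ v := by
  rw [Zsub_eq_pinnedSum, fieldWeight]
  simp only [prod_singleton, prod_empty, mul_one]
  split_ifs with hv
  · rw [sdiff_eq_empty_iff_subset.mpr (singleton_subset_iff.mpr hv), pinnedSum_empty]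
  · rw [sdiff_eq_self_of_disjoint (disjoint_singleton_left.mpr hv), pinnedSum_singleton]

theorem Zsub_empty_edges (B : Matrix (Fin q) (Fin q) ℂ) (T Λ : Finset V) (σ : V → Fin q)
    (ξ : V → Fin q → ℂ) :
    Zsub B T ∅ Λ σ ξ = ∏ v ∈ T, fieldWeight Λ σ ξ v := by
  have h := Zsub_biUnion B T (S := singleton) (F := fun _ => ∅)
    (fun a _ b _ hab => disjoint_singleton.mpr hab) (by simp [edgeSupp]) Λ σ ξ
  rw [biUnion_singleton_eq_self,
    show T.biUnion (fun _ => ∅) = (∅ : Finset (Sym2 V)) by ext; simp] at h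
  simpa only [Zsub_singleton_empty] using h

end FieldWeight

section Factorization

variable {q : ℕ}

theorem Zsub_univ (B : Matrix (Fin q) (Fin q) ℂ) (F : Finset (Sym2 V)) (Λ : Finset V)
    (σ : V → Fin q) (ξ : V → Fin q → ℂ) :
    Zsub B univ F Λ σ ξ =
      Zsub B (edgeSupp F) F Λ σ ξ * ∏ v ∈ univ \ edgeSupp F, fieldWeight Λ σ ξ v := by
  have h := Zsub_union B (S₂ := univ \ edgeSupp F) (F₁ := F) (F₂ := ∅) disjoint_sdiff subset_rfl
    (by simp [edgeSupp]) Λ σ ξ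
  rwa [union_sdiff_of_subset (subset_univ _), union_empty, Zsub_empty_edges] at h

theorem Zext_one_add_mul (G : SimpleGraph V) (B : Matrix (Fin q) (Fin q) ℂ) (z : ℂ)
    (Λ : Finset V) (σ : V → Fin q) (ξ : V → Fin q → ℂ) :
    Zext G (fun i j => 1 + z * B i j) Λ σ ξ =
      ∑ F ∈ (edges G).powerset, z ^ F.card * Zsub B univ F Λ σ ξ := by
  have expand (ψ : V → Fin q) : ∏ e ∈ edges G, edgeWeight (fun i j => 1 + z * B i j) ψ e =
      ∑ F ∈ (edges G).powerset, z ^ F.card * ∏ e ∈ F, edgeWeight B ψ e := by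
    simp only [edgeWeight_one_add_mul, prod_one_add, prod_mul_distrib, prod_const]
  simp only [Zext, Zsub, mul_sum, mem_inter, mem_univ, and_true, not_true_eq_false,
    false_imp_iff, imp_true_iff]
  rw [sum_comm]
  refine sum_congr rfl fun ψ _ => ?_
  split_ifs
  · rw [expand, mul_sum]
    exact sum_congr rfl fun F _ => by ring
  · simp

theorem pBC_mul_prod_polymerWeight (A : Matrix (Fin q) (Fin q) ℂ) (z : ℂ) (Λ : Finset V)
    (σ : V → Fin q) (ξ : V → Fin q → ℂ) (hξsum : ∀ v : V, (∑ i, ξ v i) ≠ 0)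
    (hξΛ : ∀ v ∈ Λ, ξ v (σ v) ≠ 0) {𝒥 : Finset (Finset (Sym2 V))}
    (h𝒥 : (𝒥 : Set (Finset (Sym2 V))).PairwiseDisjoint edgeSupp) :
    pBC Λ σ ξ * ∏ F ∈ 𝒥, polymerWeight A z Λ σ ξ F =
      z ^ (𝒥.biUnion id).card * Zsub (fun i j => A i j - 1) univ (𝒥.biUnion id) Λ σ ξ := by
  set B : Matrix (Fin q) (Fin q) ℂ := fun i j => A i j - 1
  have hfw (T : Finset V) : ∏ v ∈ T, fieldWeight Λ σ ξ v ≠ 0 := prod_ne_zero_iff.mpr fun v _ => by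
    unfold fieldWeight
    split_ifs with hv
    exacts [hξΛ v hv, hξsum v]
  have hw (F : Finset (Sym2 V)) : polymerWeight A z Λ σ ξ F =
      z ^ F.card * Zsub B (edgeSupp F) F Λ σ ξ / ∏ v ∈ edgeSupp F, fieldWeight Λ σ ξ v := by
    rw [prod_fieldWeight]
    rfl
  have hedges : (𝒥 : Set (Finset (Sym2 V))).PairwiseDisjoint id :=
    fun F₁ h₁ F₂ h₂ hne => disjoint_of_disjoint_edgeSupp (h𝒥 h₁ h₂ hne)
  calc pBC Λ σ ξ * ∏ F ∈ 𝒥, polymerWeight A z Λ σ ξ F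
      = (∏ v ∈ univ \ 𝒥.biUnion edgeSupp, fieldWeight Λ σ ξ v) * ∏ F ∈ 𝒥,
          ((∏ v ∈ edgeSupp F, fieldWeight Λ σ ξ v) * (z ^ F.card * Zsub B (edgeSupp F) F Λ σ ξ /
            ∏ v ∈ edgeSupp F, fieldWeight Λ σ ξ v)) := by
        rw [pBC_eq_prod_fieldWeight, ← prod_sdiff (subset_univ (𝒥.biUnion edgeSupp)),
          prod_biUnion h𝒥, mul_assoc, ← prod_mul_distrib]
        simp only [hw]
    _ = z ^ (𝒥.biUnion id).card * ((∏ F ∈ 𝒥, Zsub B (edgeSupp F) F Λ σ ξ) *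
          ∏ v ∈ univ \ 𝒥.biUnion edgeSupp, fieldWeight Λ σ ξ v) := by
        simp only [mul_div_cancel₀ _ (hfw _), prod_mul_distrib, prod_pow_eq_pow_sum,
          card_biUnion hedges, id]
        ring
    _ = z ^ (𝒥.biUnion id).card * Zsub B univ (𝒥.biUnion id) Λ σ ξ := by
        rw [Zsub_univ, edgeSupp_biUnion, Zsub_biUnion B 𝒥 (S := fun F => edgeSupp (id F))
          (F := id) h𝒥 fun _ _ => subset_rfl]
        rfl

end Factorization

section Components

open SimpleGraph

def edgeComponent (F : Finset (Sym2 V)) (e : Sym2 V) : Finset (Sym2 V) :=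
  F.filter fun e' => ∃ u ∈ e, ∃ w ∈ e', (fromEdgeSet (F : Set (Sym2 V))).Reachable u w

def edgeComponents (F : Finset (Sym2 V)) : Finset (Finset (Sym2 V)) :=
  F.image (edgeComponent F)

variable {F : Finset (Sym2 V)} {e : Sym2 V}

theorem mem_edges {G : SimpleGraph V} : e ∈ edges G ↔ e ∈ G.edgeSet :=
  Set.Finite.mem_toFinset _

omit [Fintype V] in
theorem reachable_of_mem_of_mem {s : Set (Sym2 V)} (he : e ∈ s) {u w : V} (hu : u ∈ e)
    (hw : w ∈ e) : (fromEdgeSet s).Reachable u w := by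
  induction e with
  | _ a b =>
    have hab : (fromEdgeSet s).Reachable a b := by
      by_cases h : a = b
      · exact h ▸ Reachable.refl a
      · exact ((fromEdgeSet_adj _).mpr ⟨he, h⟩).reachable
    rcases Sym2.mem_iff.mp hu with rfl | rfl <;> rcases Sym2.mem_iff.mp hw with rfl | rfl
    exacts [Reachable.refl _, hab, hab.symm, Reachable.refl _]

theorem mem_edgeComponent {e' : Sym2 V} : e' ∈ edgeComponent F e ↔
    e' ∈ F ∧ ∃ u ∈ e, ∃ w ∈ e', (fromEdgeSet (F : Set (Sym2 V))).Reachable u w := by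
  simp [edgeComponent]

theorem edgeComponent_subset : edgeComponent F e ⊆ F :=
  filter_subset _ _

theorem self_mem_edgeComponent (he : e ∈ F) : e ∈ edgeComponent F e := by
  induction e with
  | _ a b => exact mem_edgeComponent.mpr ⟨he, a, Sym2.mem_mk_left a b, a, Sym2.mem_mk_left a b,
      Reachable.refl a⟩

theorem edgeComponent_eq_of_mem (he : e ∈ F) {e' : Sym2 V} (he' : e' ∈ edgeComponent F e) :
    edgeComponent F e' = edgeComponent F e := by
  obtain ⟨he'F, a, ha, b, hb, hab⟩ := mem_edgeComponent.mp he'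
  ext e''
  simp only [mem_edgeComponent, and_congr_right_iff]
  refine fun _ => ⟨fun ⟨x, hx, y, hy, hxy⟩ => ⟨a, ha, y, hy, ?_⟩,
    fun ⟨x, hx, y, hy, hxy⟩ => ⟨b, hb, y, hy, ?_⟩⟩
  · exact (hab.trans (reachable_of_mem_of_mem he'F hb hx)).trans hxy
  · exact (hab.symm.trans (reachable_of_mem_of_mem he ha hx)).trans hxy

theorem reachable_of_mem_edgeSupp_edgeComponent (he : e ∈ F) {a v : V} (ha : a ∈ e)
    (hv : v ∈ edgeSupp (edgeComponent F e)) : (fromEdgeSet (F : Set (Sym2 V))).Reachable a v := by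
  obtain ⟨e', he', hve'⟩ := mem_edgeSupp.mp hv
  obtain ⟨he'F, a', ha', b, hb, hr⟩ := mem_edgeComponent.mp he'
  exact ((reachable_of_mem_of_mem he ha ha').trans hr).trans (reachable_of_mem_of_mem he'F hb hve')

theorem reachable_fromEdgeSet_of_closed {C : Finset (Sym2 V)}
    (hC : ∀ e ∈ F, ∀ v ∈ e, v ∈ edgeSupp C → e ∈ C) {u w : V}
    (h : (fromEdgeSet (F : Set (Sym2 V))).Reachable u w) (hu : u ∈ edgeSupp C) :
    w ∈ edgeSupp C ∧ (fromEdgeSet (C : Set (Sym2 V))).Reachable u w := by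
  obtain ⟨p⟩ := h
  induction p with
  | nil => exact ⟨hu, Reachable.refl _⟩
  | @cons x y w hadj p ih =>
    obtain ⟨hxyF, hxy⟩ := (fromEdgeSet_adj _).mp hadj
    have hxyC : s(x, y) ∈ C := hC _ hxyF x (Sym2.mem_mk_left x y) hu
    obtain ⟨hw, hyw⟩ := ih (mem_edgeSupp.mpr ⟨_, hxyC, Sym2.mem_mk_right x y⟩)
    exact ⟨hw, ((fromEdgeSet_adj _).mpr ⟨hxyC, hxy⟩).reachable.trans hyw⟩

theorem edgeComponent_closed (he : e ∈ F) :
    ∀ e' ∈ F, ∀ v ∈ e', v ∈ edgeSupp (edgeComponent F e) → e' ∈ edgeComponent F e := by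
  intro e' he' v hv hvC
  obtain ⟨a, ha⟩ : ∃ a, a ∈ e := ⟨_, e.out_fst_mem⟩
  exact mem_edgeComponent.mpr ⟨he', a, ha, v, hv, reachable_of_mem_edgeSupp_edgeComponent he ha hvC⟩

theorem isPolymer_edgeComponent {G : SimpleGraph V} (hFG : (F : Set (Sym2 V)) ⊆ G.edgeSet)
    (he : e ∈ F) : IsPolymer G (edgeComponent F e) := by
  refine ⟨⟨e, self_mem_edgeComponent he⟩, fun e' he' => hFG (edgeComponent_subset he'),
    fun u hu w hw => ?_⟩
  obtain ⟨a, ha⟩ : ∃ a, a ∈ e := ⟨_, e.out_fst_mem⟩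
  have huw := (reachable_of_mem_edgeSupp_edgeComponent he ha hu).symm.trans
    (reachable_of_mem_edgeSupp_edgeComponent he ha hw)
  exact (reachable_fromEdgeSet_of_closed (edgeComponent_closed he) huw hu).2

theorem biUnion_edgeComponents (F : Finset (Sym2 V)) : (edgeComponents F).biUnion id = F := by
  ext e
  simp only [edgeComponents, mem_biUnion, mem_image, id, exists_exists_and_eq_and]
  exact ⟨fun ⟨_, _, he⟩ => edgeComponent_subset he, fun he => ⟨e, he, self_mem_edgeComponent he⟩⟩

theorem pairwiseDisjoint_edgeComponents (F : Finset (Sym2 V)) :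
    (edgeComponents F : Set (Finset (Sym2 V))).PairwiseDisjoint edgeSupp := by
  simp only [edgeComponents, coe_image]
  rintro _ ⟨e₁, he₁, rfl⟩ _ ⟨e₂, he₂, rfl⟩ hne
  refine disjoint_left.mpr fun v hv₁ hv₂ => hne ?_
  obtain ⟨e', he', hve'⟩ := mem_edgeSupp.mp hv₂
  have he'₁ := edgeComponent_closed he₁ e' (edgeComponent_subset he') v hve' hv₁
  rw [← edgeComponent_eq_of_mem he₁ he'₁, edgeComponent_eq_of_mem he₂ he']

theorem edgeComponent_biUnion {G : SimpleGraph V} {𝒥 : Finset (Finset (Sym2 V))}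
    (hpoly : ∀ C ∈ 𝒥, IsPolymer G C)
    (hdisj : (𝒥 : Set (Finset (Sym2 V))).PairwiseDisjoint edgeSupp) {C : Finset (Sym2 V)}
    (hC : C ∈ 𝒥) (he : e ∈ C) : edgeComponent (𝒥.biUnion id) e = C := by
  have hclosed : ∀ e' ∈ 𝒥.biUnion id, ∀ v ∈ e', v ∈ edgeSupp C → e' ∈ C := by
    intro e' he' v hv hvC
    obtain ⟨C', hC', he'C'⟩ := mem_biUnion.mp he'
    obtain rfl : C' = C := hdisj.elim hC' hC
      (not_disjoint_iff.mpr ⟨v, mem_edgeSupp.mpr ⟨e', he'C', hv⟩, hvC⟩)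
    exact he'C'
  ext e'
  rw [mem_edgeComponent]
  constructor
  · rintro ⟨he', a, ha, b, hb, hab⟩
    exact hclosed e' he' b hb
      (reachable_fromEdgeSet_of_closed hclosed hab (mem_edgeSupp.mpr ⟨e, he, ha⟩)).1
  · intro he'
    obtain ⟨a, ha⟩ : ∃ a, a ∈ e := ⟨_, e.out_fst_mem⟩
    obtain ⟨b, hb⟩ : ∃ b, b ∈ e' := ⟨_, e'.out_fst_mem⟩
    refine ⟨mem_biUnion.mpr ⟨C, hC, he'⟩, a, ha, b, hb, ?_⟩
    refine ((hpoly C hC).2.2 a (mem_edgeSupp.mpr ⟨e, he, ha⟩) b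
      (mem_edgeSupp.mpr ⟨e', he', hb⟩)).mono (fromEdgeSet_mono fun x hx => ?_)
    exact mem_biUnion.mpr ⟨C, hC, hx⟩

theorem edgeComponents_biUnion {G : SimpleGraph V} {𝒥 : Finset (Finset (Sym2 V))}
    (hpoly : ∀ C ∈ 𝒥, IsPolymer G C)
    (hdisj : (𝒥 : Set (Finset (Sym2 V))).PairwiseDisjoint edgeSupp) :
    edgeComponents (𝒥.biUnion id) = 𝒥 := by
  ext C
  simp only [edgeComponents, mem_image, mem_biUnion, id]
  constructor
  · rintro ⟨e, ⟨C', hC', he⟩, rfl⟩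
    rwa [edgeComponent_biUnion hpoly hdisj hC' he]
  · intro hC
    obtain ⟨e, he⟩ := (hpoly C hC).1
    exact ⟨e, ⟨C, hC, he⟩, edgeComponent_biUnion hpoly hdisj hC he⟩

end Components

theorem polymer_identity_general {q : ℕ}
    (A : Matrix (Fin q) (Fin q) ℂ)
    (G : SimpleGraph V) (Λ : Finset V) (σ : V → Fin q) (z : ℂ)
    (ξ : V → Fin q → ℂ)
    (hξsum : ∀ v : V, (∑ i, ξ v i) ≠ 0) (hξΛ : ∀ v ∈ Λ, ξ v (σ v) ≠ 0) :
    pBC Λ σ ξ * Zpolymer G (polymerWeight A z Λ σ ξ) =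
      Zext G (fun i j => 1 + z * (A i j - 1)) Λ σ ξ := by
  rw [Zext_one_add_mul G (fun i j => A i j - 1), Zpolymer, mul_sum]
  simp only [mul_ite, mul_zero]
  rw [← sum_filter]
  refine sum_nbij' (fun 𝒥 => 𝒥.biUnion id) edgeComponents ?_ ?_ ?_ ?_ ?_
  · intro 𝒥 h𝒥
    simp only [mem_filter, mem_univ, true_and] at h𝒥
    exact mem_powerset.mpr fun e he => by
      obtain ⟨C, hC, heC⟩ := mem_biUnion.mp he
      exact mem_edges.mpr ((h𝒥.1 C hC).2.1 heC)
  · intro F hF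
    have hFG : (F : Set (Sym2 V)) ⊆ G.edgeSet := fun e he => mem_edges.mp (mem_powerset.mp hF he)
    exact mem_filter.mpr ⟨mem_univ _, forall_mem_image.mpr fun e he =>
      isPolymer_edgeComponent hFG he, pairwiseDisjoint_edgeComponents F⟩
  · intro 𝒥 h𝒥
    simp only [mem_filter, mem_univ, true_and] at h𝒥
    exact edgeComponents_biUnion h𝒥.1 h𝒥.2
  · intro F _
    exact biUnion_edgeComponents F
  · intro 𝒥 h𝒥
    exact pBC_mul_prod_polymerWeight A z Λ σ ξ hξsum hξΛ (mem_filter.mp h𝒥).2.2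

/-- With the polymer weights `w^σ` above, for any symmetric complex
`q × q` matrix `A`, any finite graph `G`, any boundary condition `σ` on `Λ ⊆ V`, any
`z ∈ ℂ` and any external fields `ξ` for which all denominators are nonzero:
`p^σ(ξ) · Z_Γ(w^σ) = Z^σ_G(J + z(A−J), ξ)`. -/
theorem polymer_identity {q : ℕ} (hq : 2 ≤ q)
    (A : Matrix (Fin q) (Fin q) ℂ) (hA : ∀ i j, A i j = A j i)
    (G : SimpleGraph V) (Λ : Finset V) (σ : V → Fin q) (z : ℂ)
    (ξ : V → Fin q → ℂ)
    (hξsum : ∀ v : V, (∑ i, ξ v i) ≠ 0) (hξΛ : ∀ v ∈ Λ, ξ v (σ v) ≠ 0) :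
    pBC Λ σ ξ * Zpolymer G (polymerWeight A z Λ σ ξ) =
      Zext G (fun i j => 1 + z * (A i j - 1)) Λ σ ξ :=
  polymer_identity_general A G Λ σ z ξ hξsum hξΛ

end GraphHom

end
end
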